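/- arXiv:0801.2496 — 10 statements merged into one kernel-verified Lean document; each statement's English description precedes it below -/
import Mathlib

section
/- A finite-dimensional ℤ₂-graded algebra over ℂ is semisimple as a graded algebra (every graded two-sided ideal admits a graded complementary ideal) if and only if the underlying ungraded algebra is semisimple. -/
/-!
The grading `A = A₀ ⊕ A₁` is encoded by the algebra involution `σ` acting by `1` on `A₀` and
by `-1` on `A₁`; since `2` is invertible, a two-sided ideal is graded exactly when it is
`σ`-stable.

If `A` is graded semisimple, the Jacobson radical `J`, being stable under every ring
automorphism, is graded and so has a two-sided complement. Writing `1 = e + e'` accordingly,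
`e'` has a left inverse because `e ∈ J`, and `e' * e = 0`, so `e = 0`; then `J = J * e = 0` and
the artinian ring `A` is semisimple.

Conversely, if `A` is semisimple, every two-sided ideal `I` has a right unit `e`, and its right
annihilator is a two-sided complement (`x = x * e + (x - x * e)`), which is `σ`-stable as soon
as `I` is.
-/

/-- A two-sided ideal `I` of a `ℤ₂`-graded algebra is graded if every element of `I`
is the sum of an even element of `I` and an odd element of `I`. -/
def IsGradedIdeal {A : Type*} [Ring A] [Algebra ℂ A] (even odd : Submodule ℂ A)
    (I : TwoSidedIdeal A) : Prop :=
  ∀ x ∈ I, ∃ a ∈ even, ∃ b ∈ odd, a ∈ I ∧ b ∈ I ∧ x = a + b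

theorem Ring.jacobson_eq_bot_of_complement {A : Type*} [Ring A] {I' : TwoSidedIdeal A}
    (hdisj : ∀ x, x ∈ (Ring.jacobson A).toTwoSided → x ∈ I' → x = 0)
    (hsum : ∀ x, ∃ a ∈ (Ring.jacobson A).toTwoSided, ∃ b ∈ I', x = a + b) :
    Ring.jacobson A = ⊥ := by
  set J := (Ring.jacobson A).toTwoSided
  obtain ⟨e, he, e', he', h1⟩ := hsum 1
  have mul_e (x : A) (hx : x ∈ J) : x * e = x := by
    have : x * e' = 0 := hdisj _ (J.mul_mem_right _ _ hx) (I'.mul_mem_left _ _ he')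
    rw [← add_zero (x * e), ← this, ← mul_add, ← h1, mul_one]
  have he'e : e' * e = 0 := hdisj _ (J.mul_mem_left _ _ he) (I'.mul_mem_right _ _ he')
  obtain ⟨z, hz⟩ : ∃ z, z * e' = 1 := by
    rw [Ideal.mem_toTwoSided, ← Ideal.jacobson_bot, Ideal.mem_jacobson_iff] at he
    obtain ⟨z, hz⟩ := he (-1)
    refine ⟨z, ?_⟩
    calc z * e' = z * -1 * e + z - 1 + 1 := by rw [eq_sub_of_add_eq' h1.symm]; noncomm_ring
      _ = 1 := by rw [Ideal.mem_bot.mp hz, zero_add]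
  have he0 : e = 0 := by rw [← one_mul e, ← hz, mul_assoc, he'e, mul_zero]
  refine (Submodule.eq_bot_iff _).2 fun x hx => ?_
  rw [← mul_e x (Ideal.mem_toTwoSided.2 hx), he0, mul_zero]

theorem IsSemisimpleRing.exists_mem_forall_mul_eq_self {A : Type*} [Ring A]
    [IsSemisimpleRing A] (I : Ideal A) : ∃ e ∈ I, ∀ x ∈ I, x * e = x := by
  obtain ⟨e, he, rfl⟩ := IsSemisimpleRing.ideal_eq_span_idempotent I
  refine ⟨e, Ideal.mem_span_singleton_self e, fun x hx => ?_⟩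
  obtain ⟨a, rfl⟩ := Ideal.mem_span_singleton'.mp hx
  rw [mul_assoc, he.eq]

namespace TwoSidedIdeal

variable {A : Type*} [Ring A]

def rightAnnihilator (I : TwoSidedIdeal A) : TwoSidedIdeal A :=
  .mk' {x | ∀ y ∈ I, y * x = 0} (fun y _ => mul_zero y)
    (fun hx₁ hx₂ y hy => by rw [mul_add, hx₁ y hy, hx₂ y hy, add_zero])
    (fun hx y hy => by rw [mul_neg, hx y hy, neg_zero])
    (fun {z _} hx y hy => by rw [← mul_assoc]; exact hx _ (I.mul_mem_right y z hy))
    (fun {_ z} hx y hy => by rw [← mul_assoc, hx y hy, zero_mul])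

theorem mem_rightAnnihilator {I : TwoSidedIdeal A} {x : A} :
    x ∈ I.rightAnnihilator ↔ ∀ y ∈ I, y * x = 0 :=
  mem_mk' ..

theorem map_mem_rightAnnihilator {I : TwoSidedIdeal A} (σ : A ≃+* A)
    (hI : ∀ y ∈ I, σ.symm y ∈ I) {x : A} (hx : x ∈ I.rightAnnihilator) :
    σ x ∈ I.rightAnnihilator := by
  rw [mem_rightAnnihilator] at hx ⊢
  intro y hy
  rw [← σ.apply_symm_apply y, ← map_mul, hx _ (hI y hy), map_zero]

variable [IsSemisimpleRing A] (I : TwoSidedIdeal A)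

theorem eq_zero_of_mem_of_mem_rightAnnihilator {x : A} (hx : x ∈ I)
    (hx' : x ∈ I.rightAnnihilator) : x = 0 := by
  obtain ⟨f, hf, mul_f⟩ :=
    IsSemisimpleRing.exists_mem_forall_mul_eq_self (I ⊓ I.rightAnnihilator).asIdeal
  simp only [mem_asIdeal, mem_inf] at hf mul_f
  rw [← mul_f x ⟨hx, hx'⟩]
  exact mem_rightAnnihilator.mp hf.2 x hx

theorem exists_add_mem_rightAnnihilator (x : A) :
    ∃ a ∈ I, ∃ b ∈ I.rightAnnihilator, x = a + b := by
  obtain ⟨e, he, mul_e⟩ := IsSemisimpleRing.exists_mem_forall_mul_eq_self I.asIdeal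
  simp only [mem_asIdeal] at he mul_e
  refine ⟨x * e, I.mul_mem_left _ _ he, x - x * e, ?_, by abel⟩
  refine mem_rightAnnihilator.2 fun y hy => ?_
  rw [mul_sub, ← mul_assoc, mul_e _ (I.mul_mem_right _ _ hy), sub_self]

end TwoSidedIdeal

structure IsSuperGrading {R A : Type*} [CommRing R] [Ring A] [Algebra R A]
    (A₀ A₁ : Submodule R A) : Prop where
  isCompl : IsCompl A₀ A₁
  mul_mem_even_even : ∀ a ∈ A₀, ∀ b ∈ A₀, a * b ∈ A₀
  mul_mem_even_odd : ∀ a ∈ A₀, ∀ b ∈ A₁, a * b ∈ A₁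
  mul_mem_odd_even : ∀ a ∈ A₁, ∀ b ∈ A₀, a * b ∈ A₁
  mul_mem_odd_odd : ∀ a ∈ A₁, ∀ b ∈ A₁, a * b ∈ A₀

namespace IsSuperGrading

section Involution

variable {R A : Type*} [CommRing R] [Ring A] [Algebra R A] {A₀ A₁ : Submodule R A}
  (hA : IsSuperGrading A₀ A₁)

theorem exists_add_eq (hA : IsSuperGrading A₀ A₁) (x : A) : ∃ a ∈ A₀, ∃ b ∈ A₁, a + b = x := by
  obtain ⟨a, b, ha, hb, rfl⟩ :=
    Submodule.codisjoint_iff_exists_add_eq.mp hA.isCompl.codisjoint x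
  exact ⟨a, ha, b, hb, rfl⟩

noncomputable def involutionLinearMap : A →ₗ[R] A :=
  LinearMap.ofIsCompl hA.isCompl A₀.subtype (-A₁.subtype)

theorem involutionLinearMap_of_mem_even {a : A} (ha : a ∈ A₀) :
    hA.involutionLinearMap a = a :=
  LinearMap.ofIsCompl_apply_left hA.isCompl ⟨a, ha⟩

theorem involutionLinearMap_of_mem_odd {b : A} (hb : b ∈ A₁) :
    hA.involutionLinearMap b = -b :=
  LinearMap.ofIsCompl_apply_right hA.isCompl ⟨b, hb⟩

theorem involutionLinearMap_involutive : Function.Involutive hA.involutionLinearMap := by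
  intro x
  obtain ⟨a, ha, b, hb, rfl⟩ := hA.exists_add_eq x
  simp [hA.involutionLinearMap_of_mem_even ha, hA.involutionLinearMap_of_mem_odd hb]

theorem involutionLinearMap_mul (x y : A) :
    hA.involutionLinearMap (x * y) = hA.involutionLinearMap x * hA.involutionLinearMap y := by
  obtain ⟨a, ha, b, hb, rfl⟩ := hA.exists_add_eq x
  obtain ⟨c, hc, d, hd, rfl⟩ := hA.exists_add_eq y
  simp only [add_mul, mul_add, map_add, hA.involutionLinearMap_of_mem_even ha,
    hA.involutionLinearMap_of_mem_odd hb, hA.involutionLinearMap_of_mem_even hc,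
    hA.involutionLinearMap_of_mem_odd hd,
    hA.involutionLinearMap_of_mem_even (hA.mul_mem_even_even a ha c hc),
    hA.involutionLinearMap_of_mem_odd (hA.mul_mem_even_odd a ha d hd),
    hA.involutionLinearMap_of_mem_odd (hA.mul_mem_odd_even b hb c hc),
    hA.involutionLinearMap_of_mem_even (hA.mul_mem_odd_odd b hb d hd)]
  noncomm_ring

theorem involutionLinearMap_one : hA.involutionLinearMap 1 = 1 := by
  set σ := hA.involutionLinearMap
  calc σ 1 = σ 1 * σ (σ 1) := by rw [hA.involutionLinearMap_involutive 1, mul_one]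
    _ = 1 := by rw [← hA.involutionLinearMap_mul, one_mul, hA.involutionLinearMap_involutive]

noncomputable def involution : A ≃ₐ[R] A :=
  .ofLinearEquiv (.ofInvolutive _ hA.involutionLinearMap_involutive) hA.involutionLinearMap_one
    hA.involutionLinearMap_mul

theorem involution_of_mem_even {a : A} (ha : a ∈ A₀) : hA.involution a = a :=
  hA.involutionLinearMap_of_mem_even ha

theorem involution_of_mem_odd {b : A} (hb : b ∈ A₁) : hA.involution b = -b :=
  hA.involutionLinearMap_of_mem_odd hb

@[simp]
theorem involution_involution (x : A) : hA.involution (hA.involution x) = x :=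
  hA.involutionLinearMap_involutive x

@[simp]
theorem involution_symm : hA.involution.symm = hA.involution :=
  AlgEquiv.ext fun x => by rw [AlgEquiv.symm_apply_eq, involution_involution]

end Involution

variable {A : Type*} [Ring A] [Algebra ℂ A] {A₀ A₁ : Submodule ℂ A}

theorem isGradedIdeal_iff (hA : IsSuperGrading A₀ A₁) (I : TwoSidedIdeal A) :
    IsGradedIdeal A₀ A₁ I ↔ ∀ x ∈ I, hA.involution x ∈ I := by
  constructor
  · rintro hI x hx
    obtain ⟨a, ha, b, hb, haI, hbI, rfl⟩ := hI x hx
    rw [map_add, hA.involution_of_mem_even ha, hA.involution_of_mem_odd hb]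
    exact I.add_mem haI (I.neg_mem hbI)
  · intro hI x hx
    obtain ⟨a, ha, b, hb, rfl⟩ := hA.exists_add_eq x
    have hσ : hA.involution (a + b) = a - b := by
      rw [map_add, hA.involution_of_mem_even ha, hA.involution_of_mem_odd hb, sub_eq_add_neg]
    have smul_mem (c : ℂ) {y : A} (hy : y ∈ I) : c • y ∈ I := by
      rw [Algebra.smul_def]
      exact I.mul_mem_left _ _ hy
    have ha_eq : a = (2 : ℂ)⁻¹ • (a + b + hA.involution (a + b)) := by rw [hσ]; module
    have hb_eq : b = (2 : ℂ)⁻¹ • (a + b - hA.involution (a + b)) := by rw [hσ]; module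
    refine ⟨a, ha, b, hb, ?_, ?_, rfl⟩
    · rw [ha_eq]; exact smul_mem _ (I.add_mem hx (hI _ hx))
    · rw [hb_eq]; exact smul_mem _ (I.sub_mem hx (hI _ hx))

theorem isGradedIdeal_jacobson (hA : IsSuperGrading A₀ A₁) :
    IsGradedIdeal A₀ A₁ (Ring.jacobson A).toTwoSided :=
  (hA.isGradedIdeal_iff _).2 fun x hx => by
    rw [Ideal.mem_toTwoSided] at hx ⊢
    exact Ring.le_comap_jacobson (hA.involution.toRingEquiv : A →+* A) hx

theorem isGradedIdeal_rightAnnihilator (hA : IsSuperGrading A₀ A₁) {I : TwoSidedIdeal A}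
    (hI : IsGradedIdeal A₀ A₁ I) :
    IsGradedIdeal A₀ A₁ I.rightAnnihilator := by
  rw [hA.isGradedIdeal_iff] at hI ⊢
  exact fun x hx => I.map_mem_rightAnnihilator hA.involution.toRingEquiv
    (fun y hy => by simpa using hI y hy) hx

end IsSuperGrading

/-- A finite-dimensional `ℤ₂`-graded algebra over `ℂ` is semisimple
as a graded algebra — i.e. every graded two-sided ideal `I` admits a graded two-sided
ideal `I'` with `A = I ⊕ I'` — if and only if the underlying ungraded algebra is
semisimple. -/
theorem stmt5 {A : Type*} [Ring A] [Algebra ℂ A] [FiniteDimensional ℂ A]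
    (A₀ A₁ : Submodule ℂ A)
    (hcompl : IsCompl A₀ A₁)
    (h00 : ∀ a ∈ A₀, ∀ b ∈ A₀, a * b ∈ A₀)
    (h01 : ∀ a ∈ A₀, ∀ b ∈ A₁, a * b ∈ A₁)
    (h10 : ∀ a ∈ A₁, ∀ b ∈ A₀, a * b ∈ A₁)
    (h11 : ∀ a ∈ A₁, ∀ b ∈ A₁, a * b ∈ A₀) :
    (∀ I : TwoSidedIdeal A, IsGradedIdeal A₀ A₁ I →
      ∃ I' : TwoSidedIdeal A, IsGradedIdeal A₀ A₁ I' ∧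
        (∀ x, x ∈ I → x ∈ I' → x = 0) ∧ (∀ x : A, ∃ a ∈ I, ∃ b ∈ I', x = a + b)) ↔
    IsSemisimpleRing A := by
  have hA : IsSuperGrading A₀ A₁ := ⟨hcompl, h00, h01, h10, h11⟩
  constructor
  · intro hgr
    have : IsArtinianRing A := .of_finite ℂ A
    obtain ⟨I', -, hdisj, hsum⟩ := hgr _ hA.isGradedIdeal_jacobson
    exact IsArtinianRing.isSemisimpleRing_iff_jacobson.mpr
      (Ring.jacobson_eq_bot_of_complement hdisj hsum)
  · intro _ I hI
    exact ⟨I.rightAnnihilator, hA.isGradedIdeal_rightAnnihilator hI,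
      fun _ => I.eq_zero_of_mem_of_mem_rightAnnihilator, I.exists_add_mem_rightAnnihilator⟩
end

section
/- The even part A₀ of a ℤ₂-graded semisimple finite-dimensional complex algebra A is a semisimple algebra. -/
/-!
Projecting onto the even part along the odd part is a conditional expectation `E : A → A₀`: it
fixes `A₀` and is `A₀`-linear on both sides. Given a left ideal `I` of `A₀`, the left ideal
`A I` of `A` has an `A`-linear projection `P` because `A` is semisimple, and right `A₀`-linearity
of `E` gives `E (A I) ⊆ I`; so `E ∘ P` restricts to an `A₀`-linear projection of `A₀` onto `I`,
and every left ideal of `A₀` is complemented.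
-/

namespace IsSemisimpleRing

variable {R S : Type*} [Ring R] [Ring S]

theorem retraction_mem_of_mem_span (f : R →+* S) (E : S →+ R)
    (hEr : ∀ s r, E (s * f r) = E s * r) (I : Submodule R R) {w : S}
    (hw : w ∈ Submodule.span S (f '' I)) : E w ∈ I := by
  let J : Submodule S S :=
    { carrier := {w | ∀ s, E (s * w) ∈ I}
      add_mem' hv hw s := by simpa only [mul_add, map_add] using I.add_mem (hv s) (hw s)
      zero_mem' s := by simp
      smul_mem' t w hw s := by simpa only [smul_eq_mul, mul_assoc] using hw (s * t) }
  have hJ : Submodule.span S (f '' I) ≤ J := by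
    rw [Submodule.span_le]
    rintro _ ⟨i, hi, rfl⟩ s
    rw [hEr, ← smul_eq_mul]
    exact I.smul_mem (E s) hi
  simpa using hJ hw 1

theorem of_retraction [IsSemisimpleRing S] (f : R →+* S) (E : S →+ R) (hE : ∀ r, E (f r) = r)
    (hEl : ∀ r s, E (f r * s) = r * E s) (hEr : ∀ s r, E (s * f r) = E s * r) :
    IsSemisimpleRing R where
  toComplementedLattice := ⟨fun I => by
    let J := Submodule.span S (f '' I)
    obtain ⟨K, hJK⟩ := exists_isCompl J
    let P := J.projection K hJK
    let g : R →ₗ[R] I :=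
      { toFun x := ⟨E (P (f x)),
          retraction_mem_of_mem_span f E hEr I (Submodule.projection_apply_mem hJK _)⟩
        map_add' x y := by ext; simp
        map_smul' r x := by
          ext
          simp only [smul_eq_mul, map_mul, RingHom.id_apply, SetLike.mk_smul_mk]
          rw [← smul_eq_mul (f r), P.map_smul, smul_eq_mul, hEl] }
    refine ⟨LinearMap.ker g, LinearMap.isCompl_of_proj fun i => ?_⟩
    have hi : f i ∈ J := Submodule.subset_span ⟨i, i.2, rfl⟩
    ext
    simp [g, P, Submodule.projection_apply_of_mem_left hJK hi, hE]⟩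

end IsSemisimpleRing

theorem Submodule.projection_eq_of_sub_mem {R E : Type*} [Ring R] [AddCommGroup E] [Module R E]
    {p q : Submodule R E} (hpq : IsCompl p q) {x y : E} (hy : y ∈ p) (hxy : x - y ∈ q) :
    p.projection q hpq x = y := by
  rw [← add_sub_cancel y x, map_add, Submodule.projection_apply_of_mem_left hpq hy,
    Submodule.projection_apply_of_mem_right hpq hxy, add_zero]

namespace Subalgebra

open Submodule

variable {k A : Type*} [CommRing k] [Ring A] [Algebra k A] {B : Subalgebra k A} {C : Submodule k A}

theorem projection_mul_left (hBC : IsCompl (toSubmodule B) C)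
    (hBC_mul : ∀ b ∈ B, ∀ c ∈ C, b * c ∈ C) {b : A} (hb : b ∈ B) (x : A) :
    B.toSubmodule.projection C hBC (b * x) = b * B.toSubmodule.projection C hBC x := by
  refine projection_eq_of_sub_mem hBC (B.mul_mem hb (projection_apply_mem hBC x)) ?_
  rw [← mul_sub]
  exact hBC_mul b hb _ (sub_projection_mem hBC x)

theorem projection_mul_right (hBC : IsCompl (toSubmodule B) C)
    (hCB_mul : ∀ c ∈ C, ∀ b ∈ B, c * b ∈ C) (x : A) {b : A} (hb : b ∈ B) :
    B.toSubmodule.projection C hBC (x * b) = B.toSubmodule.projection C hBC x * b := by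
  refine projection_eq_of_sub_mem hBC (B.mul_mem (projection_apply_mem hBC x) hb) ?_
  rw [← sub_mul]
  exact hCB_mul _ (sub_projection_mem hBC x) b hb

theorem isSemisimpleRing_of_isCompl [IsSemisimpleRing A] (hBC : IsCompl (toSubmodule B) C)
    (hBC_mul : ∀ b ∈ B, ∀ c ∈ C, b * c ∈ C) (hCB_mul : ∀ c ∈ C, ∀ b ∈ B, c * b ∈ C) :
    IsSemisimpleRing B :=
  IsSemisimpleRing.of_retraction (B.val : B →+* A)
    (B.toSubmodule.projectionOnto C hBC).toAddMonoidHom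
    (projectionOnto_apply_left hBC)
    (fun b x => Subtype.ext (projection_mul_left hBC hBC_mul b.2 x))
    (fun x b => Subtype.ext (projection_mul_right hBC hCB_mul x b.2))

end Subalgebra

theorem stmt6_general {A : Type*} [Ring A] [Algebra ℂ A]
    (A₀ : Subalgebra ℂ A) (A₁ : Submodule ℂ A)
    (hcompl : IsCompl A₀.toSubmodule A₁)
    (h01 : ∀ a ∈ A₀, ∀ b ∈ A₁, a * b ∈ A₁)
    (h10 : ∀ a ∈ A₁, ∀ b ∈ A₀, a * b ∈ A₁)
    (hss : IsSemisimpleRing A) :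
    IsSemisimpleRing ↥A₀ :=
  A₀.isSemisimpleRing_of_isCompl hcompl h01 h10

/-- The even part `A₀` of a finite-dimensional semisimple
`ℤ₂`-graded complex algebra `A = A₀ ⊕ A₁` is a semisimple algebra. -/
theorem stmt6 {A : Type*} [Ring A] [Algebra ℂ A] [FiniteDimensional ℂ A]
    (A₀ : Subalgebra ℂ A) (A₁ : Submodule ℂ A)
    (hcompl : IsCompl A₀.toSubmodule A₁)
    (h01 : ∀ a ∈ A₀, ∀ b ∈ A₁, a * b ∈ A₁)
    (h10 : ∀ a ∈ A₁, ∀ b ∈ A₀, a * b ∈ A₁)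
    (h11 : ∀ a ∈ A₁, ∀ b ∈ A₁, a * b ∈ A₀)
    (hss : IsSemisimpleRing A) :
    IsSemisimpleRing ↥A₀ :=
  stmt6_general A₀ A₁ hcompl h01 h10 hss
end

section
/- The graded tensor product of two semisimple finite-dimensional ℤ₂-graded complex algebras is semisimple. -/
open TensorProduct in
/-- `C` (with grading `Ce ⊕ Co`) is the graded tensor product of the `ℤ₂`-graded
algebras `A = Ae ⊕ Ao` and `B = Be ⊕ Bo`: there are grading-preserving algebra
homomorphisms `φ : A → C`, `ψ : B → C` whose images supercommute
(`ψ(b)·φ(a) = (-1)^{p(a)p(b)} φ(a)·ψ(b)` for homogeneous elements), such that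
`a ⊗ b ↦ φ(a)·ψ(b)` is a linear isomorphism `A ⊗[ℂ] B ≃ C`, and the grading of `C`
is induced by `p(a ⊗ b) = p(a) + p(b)`. -/
def IsGradedTensorProduct
    {A B C : Type*} [Ring A] [Ring B] [Ring C]
    [Algebra ℂ A] [Algebra ℂ B] [Algebra ℂ C]
    (Ae Ao : Submodule ℂ A) (Be Bo : Submodule ℂ B) (Ce Co : Submodule ℂ C) : Prop :=
  ∃ (φ : A →ₐ[ℂ] C) (ψ : B →ₐ[ℂ] C),
    (∀ a ∈ Ae, φ a ∈ Ce) ∧ (∀ a ∈ Ao, φ a ∈ Co) ∧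
    (∀ b ∈ Be, ψ b ∈ Ce) ∧ (∀ b ∈ Bo, ψ b ∈ Co) ∧
    (∀ a ∈ Ae, ∀ b ∈ Be, ψ b * φ a = φ a * ψ b) ∧
    (∀ a ∈ Ae, ∀ b ∈ Bo, ψ b * φ a = φ a * ψ b) ∧
    (∀ a ∈ Ao, ∀ b ∈ Be, ψ b * φ a = φ a * ψ b) ∧
    (∀ a ∈ Ao, ∀ b ∈ Bo, ψ b * φ a = -(φ a * ψ b)) ∧
    Ce = Submodule.span ℂ ({x | ∃ a ∈ Ae, ∃ b ∈ Be, x = φ a * ψ b} ∪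
          {x | ∃ a ∈ Ao, ∃ b ∈ Bo, x = φ a * ψ b}) ∧
    Co = Submodule.span ℂ ({x | ∃ a ∈ Ae, ∃ b ∈ Bo, x = φ a * ψ b} ∪
          {x | ∃ a ∈ Ao, ∃ b ∈ Be, x = φ a * ψ b}) ∧
    Function.Bijective
      (TensorProduct.lift ((LinearMap.mul ℂ C).compl₁₂ φ.toLinearMap ψ.toLinearMap))

/-!
Work with the trace form `t(x, y) = tr (L_{x y})` of the left regular representation. Over a
field of characteristic zero a finite-dimensional algebra `D` is semisimple iff `t` is
nondegenerate. Elements of the Jacobson radical are nilpotent, so `t` vanishes on it. Conversely,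
if `t(x, ·) = 0` and `D` is semisimple, the left ideal `D x` is generated by an idempotent
`e = c x`; then `t(e, 1) = 0`, while the trace of an idempotent is its rank.

Identify `C` with `A ⊗ B` through `a ⊗ b ↦ φ a * ψ b`. Supercommutation gives
`tr_C (φ c * ψ d) = tr_A c * tr_B d` (the trace of an odd element vanishes), and hence
`t_C(u, v) = (t_A ⊗ t_B)(u, τ v)` for the Koszul sign twist `τ`. Since `τ` is an involution and
`t_A ⊗ t_B` is nondegenerate, so is `t_C`.
-/

open LinearMap TensorProduct

section RegularTraceForm

variable (K D : Type*) [CommRing K] [Ring D] [Algebra K D]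

noncomputable def regularTraceForm : D →ₗ[K] Module.Dual K D :=
  (mul K D).compr₂ (trace K D ∘ₗ mul K D)

variable {K D}

theorem regularTraceForm_apply (x y : D) :
    regularTraceForm K D x y = trace K D (mul K D (x * y)) := rfl

theorem regularTraceForm_comm (x y : D) :
    regularTraceForm K D x y = regularTraceForm K D y x := by
  simp only [regularTraceForm_apply, ← Algebra.coe_lmul_eq_mul, map_mul, trace_mul_comm]

theorem regularTraceForm_mul_left (c x y : D) :
    regularTraceForm K D (c * x) y = regularTraceForm K D x (y * c) := by
  simp only [regularTraceForm_apply, ← Algebra.coe_lmul_eq_mul, map_mul]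
  rw [mul_assoc, trace_mul_comm, mul_assoc]

end RegularTraceForm

section TraceFormCriterion

variable {K D : Type*} [Field K] [Ring D] [Algebra K D]

theorem trace_mul_eq_zero_of_isNilpotent {z : D} (hz : IsNilpotent z) :
    trace K D (mul K D z) = 0 :=
  (isNilpotent_trace_of_isNilpotent (hz.map (Algebra.lmul K D))).eq_zero

variable [FiniteDimensional K D]

theorem regularTraceForm_injective [CharZero K] [IsSemisimpleRing D] :
    Function.Injective (regularTraceForm K D) := by
  refine (injective_iff_map_eq_zero _).mpr fun x hx => ?_
  obtain ⟨e, he, hspan⟩ := IsSemisimpleRing.ideal_eq_span_idempotent (Ideal.span {x})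
  obtain ⟨c, rfl⟩ : ∃ c, c * x = e :=
    Ideal.mem_span_singleton'.mp (hspan ▸ Ideal.mem_span_singleton_self e)
  have hc : mul K D (c * x) = 0 := (he.map (Algebra.lmul K D)).eq_zero_of_trace_eq_zero <| by
    simpa [regularTraceForm_apply, hx] using regularTraceForm_mul_left (K := K) c x 1
  have : c * x = 0 := by simpa using congr($hc 1)
  rw [this, Ideal.span_singleton_eq_bot.mpr rfl, Ideal.span_singleton_eq_bot] at hspan
  exact hspan

theorem isSemisimpleRing_of_regularTraceForm_injective
    (h : Function.Injective (regularTraceForm K D)) : IsSemisimpleRing D := by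
  have : IsArtinianRing D := isArtinian_of_tower K inferInstance
  obtain ⟨n, hn⟩ := IsSemiprimaryRing.isNilpotent (R := D)
  refine IsArtinianRing.isSemisimpleRing_iff_jacobson.mpr (eq_bot_iff.mpr fun z hz => ?_)
  refine (Submodule.mem_bot _).mpr (h (LinearMap.ext fun y => ?_))
  have hyz : (y * z) ^ n = 0 := by
    simpa [hn] using Ideal.pow_mem_pow ((Ring.jacobson D).mul_mem_left y hz) n
  rw [regularTraceForm_comm, regularTraceForm_apply, map_zero, LinearMap.zero_apply]
  exact trace_mul_eq_zero_of_isNilpotent ⟨n, hyz⟩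

end TraceFormCriterion

section Parity

variable {R V W : Type*} [CommRing R] [AddCommGroup V] [Module R V] [AddCommGroup W]
  [Module R W] {V₀ V₁ : Submodule R V} {W₀ W₁ : Submodule R W}

noncomputable def parityInvolution (h : IsCompl V₀ V₁) : V →ₗ[R] V :=
  ofIsCompl h V₀.subtype (-V₁.subtype)

theorem parityInvolution_of_mem_even (h : IsCompl V₀ V₁) {v : V} (hv : v ∈ V₀) :
    parityInvolution h v = v :=
  ofIsCompl_apply_left h ⟨v, hv⟩

theorem parityInvolution_of_mem_odd (h : IsCompl V₀ V₁) {v : V} (hv : v ∈ V₁) :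
    parityInvolution h v = -v :=
  ofIsCompl_apply_right h ⟨v, hv⟩

theorem parityInvolution_parityInvolution (h : IsCompl V₀ V₁) (v : V) :
    parityInvolution h (parityInvolution h v) = v := by
  obtain ⟨x, y, hx, hy, rfl⟩ := Submodule.codisjoint_iff_exists_add_eq.mp h.codisjoint v
  simp [parityInvolution_of_mem_even h hx, parityInvolution_of_mem_odd h hy]

/-- On homogeneous tensors this is `v ⊗ w ↦ (-1) ^ (p(v) p(w)) • v ⊗ w`. -/
noncomputable def koszulTwist (hV : IsCompl V₀ V₁) (hW : IsCompl W₀ W₁) :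
    V ⊗[R] W →ₗ[R] V ⊗[R] W :=
  map id (W₀.projection W₁ hW) + map (parityInvolution hV) (W₁.projection W₀ hW.symm)

theorem koszulTwist_tmul_of_mem_even (hV : IsCompl V₀ V₁) (hW : IsCompl W₀ W₁) (v : V)
    {w : W} (hw : w ∈ W₀) : koszulTwist hV hW (v ⊗ₜ w) = v ⊗ₜ w := by
  simp [koszulTwist, Submodule.projection_apply_of_mem_left hW hw,
    Submodule.projection_apply_of_mem_right hW.symm hw]

theorem koszulTwist_tmul_of_mem_odd (hV : IsCompl V₀ V₁) (hW : IsCompl W₀ W₁) (v : V)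
    {w : W} (hw : w ∈ W₁) : koszulTwist hV hW (v ⊗ₜ w) = parityInvolution hV v ⊗ₜ w := by
  simp [koszulTwist, Submodule.projection_apply_of_mem_right hW hw,
    Submodule.projection_apply_of_mem_left hW.symm hw]

theorem koszulTwist_koszulTwist (hV : IsCompl V₀ V₁) (hW : IsCompl W₀ W₁) (x : V ⊗[R] W) :
    koszulTwist hV hW (koszulTwist hV hW x) = x := by
  induction x using TensorProduct.induction_on with
  | zero => simp
  | add x y hx hy => rw [map_add, map_add, hx, hy]
  | tmul v w =>
    obtain ⟨w₀, w₁, hw₀, hw₁, rfl⟩ :=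
      Submodule.codisjoint_iff_exists_add_eq.mp hW.codisjoint w
    simp only [tmul_add, map_add, koszulTwist_tmul_of_mem_even hV hW _ hw₀,
      koszulTwist_tmul_of_mem_odd hV hW _ hw₁, parityInvolution_parityInvolution]

end Parity

section Trace

variable {K V : Type*} [Field K] [AddCommGroup V] [Module K V] [FiniteDimensional K V]
  {p q : Submodule K V}

theorem trace_comp_projection_eq_zero (h : IsCompl p q) {f : V →ₗ[K] V}
    (hf : ∀ x ∈ p, f x ∈ q) : trace K V (f ∘ₗ p.projection q h) = 0 := by
  rw [Submodule.projection, ← comp_assoc, trace_comp_comm']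
  convert map_zero (trace K p)
  ext x
  simp [Submodule.projectionOnto_apply_of_mem_right h (hf x x.2)]

theorem trace_eq_zero_of_isCompl_of_swap (h : IsCompl p q) {f : V →ₗ[K] V}
    (hpq : ∀ x ∈ p, f x ∈ q) (hqp : ∀ x ∈ q, f x ∈ p) : trace K V f = 0 := by
  rw [← f.comp_id, ← Submodule.projection_add_projection_eq_id h, comp_add, map_add,
    trace_comp_projection_eq_zero h hpq, trace_comp_projection_eq_zero h.symm hqp, add_zero]

end Trace

theorem LinearEquiv.trace_eq_of_comp_eq {R M N : Type*} [CommRing R] [AddCommGroup M]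
    [Module R M] [AddCommGroup N] [Module R N] (e : M ≃ₗ[R] N) {f : M →ₗ[R] M}
    {g : N →ₗ[R] N} (h : e.toLinearMap ∘ₗ f = g ∘ₗ e.toLinearMap) :
    trace R N g = trace R M f := by
  rw [← trace_conj' f e, e.conj_apply, h, comp_assoc, e.comp_symm, comp_id]

theorem mul_mul_mul_of_semiconjBy {M : Type*} [Semigroup M] {x y p p' : M} (q : M)
    (h : SemiconjBy y p p') : x * y * (p * q) = x * p' * (y * q) := by
  simp only [mul_assoc, ← mul_assoc y, h.eq]

section GradedTensorProduct

variable {K A B C : Type*} [Field K] [Ring A] [Ring B] [Ring C]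
  [Algebra K A] [Algebra K B] [Algebra K C] {Ae Ao : Submodule K A} {Be Bo : Submodule K B}

theorem commute_map_of_isCompl (hA : IsCompl Ae Ao) (φ : A →ₐ[K] C) {c : C}
    (he : ∀ a ∈ Ae, c * φ a = φ a * c) (ho : ∀ a ∈ Ao, c * φ a = φ a * c) (a : A) :
    Commute c (φ a) := by
  obtain ⟨x, y, hx, hy, rfl⟩ := Submodule.codisjoint_iff_exists_add_eq.mp hA.codisjoint a
  simp only [Commute, SemiconjBy, map_add, mul_add, add_mul, he x hx, ho y hy]

theorem semiconjBy_map_parityInvolution (hA : IsCompl Ae Ao) (φ : A →ₐ[K] C) {c : C}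
    (he : ∀ a ∈ Ae, c * φ a = φ a * c) (ho : ∀ a ∈ Ao, c * φ a = -(φ a * c)) (a : A) :
    SemiconjBy c (φ a) (φ (parityInvolution hA a)) := by
  obtain ⟨x, y, hx, hy, rfl⟩ := Submodule.codisjoint_iff_exists_add_eq.mp hA.codisjoint a
  simp only [SemiconjBy, map_add, parityInvolution_of_mem_even hA hx,
    parityInvolution_of_mem_odd hA hy, map_neg, mul_add, add_mul, neg_mul, he x hx, ho y hy]

variable (φ : A →ₐ[K] C) (ψ : B →ₐ[K] C)

noncomputable def tensorMul : A ⊗[K] B →ₗ[K] C :=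
  lift ((mul K C).compl₁₂ φ.toLinearMap ψ.toLinearMap)

@[simp]
theorem tensorMul_tmul (a : A) (b : B) : tensorMul φ ψ (a ⊗ₜ b) = φ a * ψ b := rfl

/-- Supercommutation is split by the parity of `b`; for odd `b` the sign `(-1) ^ p(a)` is
carried by `parityInvolution`. -/
structure IsGradedTensorMul (hA : IsCompl Ae Ao) (hB : IsCompl Be Bo) : Prop where
  bijective : Function.Bijective (tensorMul φ ψ)
  commute : ∀ a, ∀ b ∈ Be, Commute (ψ b) (φ a)
  semiconjBy : ∀ a, ∀ b ∈ Bo, SemiconjBy (ψ b) (φ a) (φ (parityInvolution hA a))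
  odd_mul_even : ∀ x ∈ Bo, ∀ y ∈ Be, x * y ∈ Bo
  odd_mul_odd : ∀ x ∈ Bo, ∀ y ∈ Bo, x * y ∈ Be

variable {φ ψ} [FiniteDimensional K B]

theorem trace_mul_eq_zero_of_mem_odd (hB : IsCompl Be Bo)
    (hoe : ∀ x ∈ Bo, ∀ y ∈ Be, x * y ∈ Bo) (hoo : ∀ x ∈ Bo, ∀ y ∈ Bo, x * y ∈ Be) {b : B}
    (hb : b ∈ Bo) : trace K B (mul K B b) = 0 :=
  trace_eq_zero_of_isCompl_of_swap hB (hoe b hb) (hoo b hb)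

variable {hA : IsCompl Ae Ao} {hB : IsCompl Be Bo}

theorem IsGradedTensorMul.regularTraceForm_odd_even_eq_zero (h : IsGradedTensorMul φ ψ hA hB)
    {x y : B} (hx : x ∈ Bo) (hy : y ∈ Be) : regularTraceForm K B x y = 0 :=
  trace_mul_eq_zero_of_mem_odd hB h.odd_mul_even h.odd_mul_odd (h.odd_mul_even x hx y hy)

variable [FiniteDimensional K A]

theorem trace_mul_map_mul_map_of_semiconjBy (hΛ : Function.Bijective (tensorMul φ ψ))
    {g : A →ₗ[K] A} {d : B} (hg : ∀ a, SemiconjBy (ψ d) (φ a) (φ (g a))) (c : A) :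
    trace K C (mul K C (φ c * ψ d)) = trace K A (mul K A c ∘ₗ g) * trace K B (mul K B d) := by
  rw [← trace_tensorProduct']
  refine (LinearEquiv.ofBijective _ hΛ).trace_eq_of_comp_eq (TensorProduct.ext' fun a b => ?_)
  simp [mul_mul_mul_of_semiconjBy _ (hg a)]

namespace IsGradedTensorMul

theorem trace_mul_map_mul_map (h : IsGradedTensorMul φ ψ hA hB) (c : A) (d : B) :
    trace K C (mul K C (φ c * ψ d)) = trace K A (mul K A c) * trace K B (mul K B d) := by
  obtain ⟨x, y, hx, hy, rfl⟩ := Submodule.codisjoint_iff_exists_add_eq.mp hB.codisjoint d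
  have hy₀ := trace_mul_eq_zero_of_mem_odd hB h.odd_mul_even h.odd_mul_odd hy
  rw [map_add, mul_add, map_add, map_add,
    trace_mul_map_mul_map_of_semiconjBy h.bijective (g := LinearMap.id) (h.commute · x hx),
    trace_mul_map_mul_map_of_semiconjBy h.bijective (h.semiconjBy · y hy), map_add, map_add,
    hy₀, comp_id, mul_zero, add_zero, add_zero]

theorem regularTraceForm_map_mul_map (h : IsGradedTensorMul φ ψ hA hB) {g : A →ₗ[K] A}
    {b : B} (hg : ∀ a, SemiconjBy (ψ b) (φ a) (φ (g a))) (a a' : A) (b' : B) :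
    regularTraceForm K C (φ a * ψ b) (φ a' * ψ b') =
      regularTraceForm K A a (g a') * regularTraceForm K B b b' := by
  rw [regularTraceForm_apply, mul_mul_mul_of_semiconjBy _ (hg a'), ← map_mul, ← map_mul,
    h.trace_mul_map_mul_map]
  rfl

theorem regularTraceForm_tensorMul (h : IsGradedTensorMul φ ψ hA hB) (u v : A ⊗[K] B) :
    regularTraceForm K C (tensorMul φ ψ u) (tensorMul φ ψ v) =
      dualDistrib K A B (map (regularTraceForm K A) (regularTraceForm K B) u)
        (koszulTwist hA hB v) := by
  suffices (regularTraceForm K C ∘ₗ tensorMul φ ψ).compl₂ (tensorMul φ ψ) =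
      (dualDistrib K A B ∘ₗ map (regularTraceForm K A) (regularTraceForm K B)).compl₂
        (koszulTwist hA hB) from congr($this u v)
  refine TensorProduct.ext' fun a b => TensorProduct.ext' fun a' b' => ?_
  obtain ⟨y, z, hy, hz, rfl⟩ := Submodule.codisjoint_iff_exists_add_eq.mp hB.codisjoint b
  obtain ⟨y', z', hy', hz', rfl⟩ := Submodule.codisjoint_iff_exists_add_eq.mp hB.codisjoint b'
  have hyz' : regularTraceForm K B y z' = 0 := by
    rw [regularTraceForm_comm, h.regularTraceForm_odd_even_eq_zero hz' hy]
  simp only [compl₂_apply, comp_apply, tmul_add, map_add, LinearMap.add_apply, tensorMul_tmul,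
    koszulTwist_tmul_of_mem_even hA hB _ hy', koszulTwist_tmul_of_mem_odd hA hB _ hz',
    map_tmul, dualDistrib_apply, h.regularTraceForm_odd_even_eq_zero hz hy', hyz',
    h.regularTraceForm_map_mul_map (g := LinearMap.id) (h.commute · y hy),
    h.regularTraceForm_map_mul_map (h.semiconjBy · z hz), LinearMap.id_apply]
  ring

theorem regularTraceForm_injective (h : IsGradedTensorMul φ ψ hA hB)
    (hAinj : Function.Injective (regularTraceForm K A))
    (hBinj : Function.Injective (regularTraceForm K B)) :
    Function.Injective (regularTraceForm K C) := by
  refine (injective_iff_map_eq_zero _).mpr fun x hx => ?_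
  obtain ⟨u, rfl⟩ := h.bijective.surjective x
  have hW : Function.Injective
      (dualDistrib K A B ∘ₗ map (regularTraceForm K A) (regularTraceForm K B)) :=
    (dualDistribEquiv K A B).injective.comp (map_injective_of_flat_flat _ _ hAinj hBinj)
  suffices u = 0 by rw [this, map_zero]
  refine hW (LinearMap.ext fun w => ?_)
  rw [comp_apply, ← koszulTwist_koszulTwist hA hB w, ← h.regularTraceForm_tensorMul, hx]
  simp

end IsGradedTensorMul

end GradedTensorProduct

theorem stmt8_general {A B C : Type*} [Ring A] [Ring B] [Ring C]
    [Algebra ℂ A] [Algebra ℂ B] [Algebra ℂ C]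
    [FiniteDimensional ℂ A] [FiniteDimensional ℂ B]
    (Ae Ao : Submodule ℂ A) (Be Bo : Submodule ℂ B) (Ce Co : Submodule ℂ C)
    (hA : IsCompl Ae Ao) (hB : IsCompl Be Bo)
    (hBoe : ∀ a ∈ Bo, ∀ b ∈ Be, a * b ∈ Bo) (hBoo : ∀ a ∈ Bo, ∀ b ∈ Bo, a * b ∈ Be)
    (hssA : IsSemisimpleRing A) (hssB : IsSemisimpleRing B)
    (hC : IsGradedTensorProduct Ae Ao Be Bo Ce Co) :
    IsSemisimpleRing C := by
  obtain ⟨φ, ψ, -, -, -, -, hee, heo, hoe, hoo, -, -, hΛ⟩ := hC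
  have : FiniteDimensional ℂ C := Module.Finite.equiv (LinearEquiv.ofBijective _ hΛ)
  have h : IsGradedTensorMul φ ψ hA hB :=
    { bijective := hΛ
      commute := fun a b hb => commute_map_of_isCompl hA φ (hee · · b hb) (hoe · · b hb) a
      semiconjBy := fun a b hb =>
        semiconjBy_map_parityInvolution hA φ (heo · · b hb) (hoo · · b hb) a
      odd_mul_even := hBoe
      odd_mul_odd := hBoo }
  exact isSemisimpleRing_of_regularTraceForm_injective
    (h.regularTraceForm_injective regularTraceForm_injective regularTraceForm_injective)

/-- The graded tensor product of two semisimple finite-dimensional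
`ℤ₂`-graded complex algebras is semisimple: if `C` is a graded tensor product of the
finite-dimensional semisimple graded algebras `A = Ae ⊕ Ao` and `B = Be ⊕ Bo`,
then `C` is a semisimple algebra. -/
theorem stmt8 {A B C : Type*} [Ring A] [Ring B] [Ring C]
    [Algebra ℂ A] [Algebra ℂ B] [Algebra ℂ C]
    [FiniteDimensional ℂ A] [FiniteDimensional ℂ B]
    (Ae Ao : Submodule ℂ A) (Be Bo : Submodule ℂ B) (Ce Co : Submodule ℂ C)
    (hA : IsCompl Ae Ao) (hB : IsCompl Be Bo)
    (hAee : ∀ a ∈ Ae, ∀ b ∈ Ae, a * b ∈ Ae) (hAeo : ∀ a ∈ Ae, ∀ b ∈ Ao, a * b ∈ Ao)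
    (hAoe : ∀ a ∈ Ao, ∀ b ∈ Ae, a * b ∈ Ao) (hAoo : ∀ a ∈ Ao, ∀ b ∈ Ao, a * b ∈ Ae)
    (hBee : ∀ a ∈ Be, ∀ b ∈ Be, a * b ∈ Be) (hBeo : ∀ a ∈ Be, ∀ b ∈ Bo, a * b ∈ Bo)
    (hBoe : ∀ a ∈ Bo, ∀ b ∈ Be, a * b ∈ Bo) (hBoo : ∀ a ∈ Bo, ∀ b ∈ Bo, a * b ∈ Be)
    (hssA : IsSemisimpleRing A) (hssB : IsSemisimpleRing B)
    (hC : IsGradedTensorProduct Ae Ao Be Bo Ce Co) :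
    IsSemisimpleRing C :=
  stmt8_general Ae Ao Be Bo Ce Co hA hB hBoe hBoo hssA hssB hC
end

section
/- If a ℤ₂-graded algebra A contains an odd element p with p² = 1, then A ≅ A₀[ε], where A₀ is equipped with the ℤ₂-grading induced by the automorphism a ↦ pap⁻¹. -/
/-- If a `ℤ₂`-graded `ℂ`-algebra `A = A₀ ⊕ A₁` contains an odd
element `p` with `p² = 1`, then `A ≅ A₀[ε]`, where `A₀` carries the `ℤ₂`-grading
induced by the automorphism `a ↦ p·a·p⁻¹ = p·a·p`.  Concretely: the eigenspaces of
`a ↦ p·a·p` on `A₀` form a `ℤ₂`-grading of `A₀`, and taking `ε := p`, the map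
`(a, b) ↦ a + b·p` from `A₀ × A₀` to `A` is a bijection (note that `p² = 1` and
`p·a = (p·a·p)·p` hold automatically, so `A` satisfies the defining relations of
`A₀[ε]` for this grading). -/
theorem stmt10 {A : Type*} [Ring A] [Algebra ℂ A]
    (A₀ A₁ : Submodule ℂ A)
    (hcompl : IsCompl A₀ A₁)
    (h00 : ∀ a ∈ A₀, ∀ b ∈ A₀, a * b ∈ A₀)
    (h01 : ∀ a ∈ A₀, ∀ b ∈ A₁, a * b ∈ A₁)
    (h10 : ∀ a ∈ A₁, ∀ b ∈ A₀, a * b ∈ A₁)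
    (h11 : ∀ a ∈ A₁, ∀ b ∈ A₁, a * b ∈ A₀)
    (p : A) (hp : p ∈ A₁) (hp2 : p * p = 1) :
    ∃ B₀ B₁ : Submodule ℂ A,
      (B₀ : Set A) = {a : A | a ∈ A₀ ∧ p * a * p = a} ∧
      (B₁ : Set A) = {a : A | a ∈ A₀ ∧ p * a * p = -a} ∧
      -- `B₀ ⊕ B₁` is a `ℤ₂`-grading of the algebra `A₀`
      (∀ a ∈ A₀, ∃ a₀ ∈ B₀, ∃ a₁ ∈ B₁, a = a₀ + a₁) ∧
      (∀ x, x ∈ B₀ → x ∈ B₁ → x = 0) ∧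
      (∀ a ∈ B₀, ∀ b ∈ B₀, a * b ∈ B₀) ∧ (∀ a ∈ B₀, ∀ b ∈ B₁, a * b ∈ B₁) ∧
      (∀ a ∈ B₁, ∀ b ∈ B₀, a * b ∈ B₁) ∧ (∀ a ∈ B₁, ∀ b ∈ B₁, a * b ∈ B₀) ∧
      -- `A = A₀ ⊕ A₀·p`, i.e. `A` is isomorphic to `A₀[ε]` with `ε = p`
      Function.Bijective (fun q : ↥A₀ × ↥A₀ => (q.1 : A) + (q.2 : A) * p) := by
  set f : A →ₗ[ℂ] A := (LinearMap.mulRight ℂ p).comp (LinearMap.mulLeft ℂ p) with hf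
  have hfapp : ∀ a : A, f a = p * a * p := fun a => rfl
  -- conjugation is multiplicative
  have key : ∀ a b : A, f (a * b) = f a * f b := by
    intro a b
    simp only [hfapp, mul_assoc]
    rw [← mul_assoc p p (b * p), hp2, one_mul]
  -- conjugation is an involution
  have finv : ∀ a : A, f (f a) = a := by
    intro a
    simp only [hfapp, mul_assoc, hp2, mul_one]
    rw [← mul_assoc, hp2, one_mul]
  -- membership criteria for the two eigenspaces
  have mem0 : ∀ x : A, x ∈ LinearMap.ker (f - LinearMap.id) ↔ f x = x := by
    intro x
    simp [LinearMap.mem_ker, sub_eq_zero]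
  have mem1 : ∀ x : A, x ∈ LinearMap.ker (f + LinearMap.id) ↔ f x = -x := by
    intro x
    simp [LinearMap.mem_ker, add_eq_zero_iff_eq_neg]
  refine ⟨A₀ ⊓ LinearMap.ker (f - LinearMap.id),
          A₀ ⊓ LinearMap.ker (f + LinearMap.id), ?_, ?_, ?_, ?_, ?_, ?_, ?_, ?_, ?_⟩
  · ext a
    simp only [SetLike.mem_coe, Submodule.mem_inf, mem0, Set.mem_setOf_eq, hfapp]
  · ext a
    simp only [SetLike.mem_coe, Submodule.mem_inf, mem1, Set.mem_setOf_eq, hfapp]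
  · -- decomposition of A₀
    intro a ha
    have hpap : f a ∈ A₀ := by rw [hfapp]; exact h11 _ (h10 p hp a ha) p hp
    refine ⟨(2⁻¹ : ℂ) • (a + f a), ⟨A₀.smul_mem _ (A₀.add_mem ha hpap), ?_⟩,
            (2⁻¹ : ℂ) • (a - f a), ⟨A₀.smul_mem _ (A₀.sub_mem ha hpap), ?_⟩, ?_⟩
    · rw [SetLike.mem_coe, mem0, map_smul, map_add, finv]
      rw [add_comm (f a) a]
    · rw [SetLike.mem_coe, mem1, map_smul, map_sub, finv, ← smul_neg]
      rw [neg_sub]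
    · rw [← smul_add]
      have h2 : (a + f a) + (a - f a) = (2 : ℂ) • a := by
        rw [two_smul]; abel
      rw [h2, smul_smul]
      norm_num
  · -- disjointness
    rintro x ⟨-, hx0⟩ ⟨-, hx1⟩
    simp only [SetLike.mem_coe, mem0] at hx0
    simp only [SetLike.mem_coe, mem1] at hx1
    rw [hx0] at hx1
    have hxx : x = -x := hx1
    have h2 : (2 : ℂ) • x = 0 := by
      rw [two_smul]; nth_rewrite 2 [hxx]; simp
    simpa using (smul_eq_zero.mp h2).resolve_left (by norm_num)
  · rintro a ⟨ha0, ha⟩ b ⟨hb0, hb⟩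
    simp only [SetLike.mem_coe, mem0] at ha hb
    exact ⟨h00 a ha0 b hb0, (mem0 _).2 (by rw [key, ha, hb])⟩
  · rintro a ⟨ha0, ha⟩ b ⟨hb0, hb⟩
    simp only [SetLike.mem_coe, mem0] at ha
    simp only [SetLike.mem_coe, mem1] at hb
    exact ⟨h00 a ha0 b hb0, (mem1 _).2 (by rw [key, ha, hb, mul_neg])⟩
  · rintro a ⟨ha0, ha⟩ b ⟨hb0, hb⟩
    simp only [SetLike.mem_coe, mem1] at ha
    simp only [SetLike.mem_coe, mem0] at hb
    exact ⟨h00 a ha0 b hb0, (mem1 _).2 (by rw [key, ha, hb, neg_mul])⟩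
  · rintro a ⟨ha0, ha⟩ b ⟨hb0, hb⟩
    simp only [SetLike.mem_coe, mem1] at ha hb
    exact ⟨h00 a ha0 b hb0, (mem0 _).2 (by rw [key, ha, hb, neg_mul_neg])⟩
  · constructor
    · rintro ⟨a, b⟩ ⟨a', b'⟩ h
      simp only at h
      have hA0 : (a : A) - a' ∈ A₀ := A₀.sub_mem a.2 a'.2
      have heq : (a : A) - a' = ((b' : A) - b) * p := by
        rw [sub_mul, sub_eq_sub_iff_add_eq_add, h, add_comm]
      have hA1 : (a : A) - a' ∈ A₁ := heq ▸ h01 _ (A₀.sub_mem b'.2 b.2) p hp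
      have hz : (a : A) - a' = 0 :=
        Submodule.disjoint_def.mp hcompl.disjoint _ hA0 hA1
      have hbp : ((b' : A) - b) * p = 0 := by rw [← heq, hz]
      have hb : (b : A) = b' := by
        have := congrArg (· * p) hbp
        simp only [zero_mul, mul_assoc, hp2, mul_one] at this
        have := sub_eq_zero.mp this
        exact this.symm
      exact Prod.ext (Subtype.ext (sub_eq_zero.mp hz)) (Subtype.ext hb)
    · intro x
      have hx : x ∈ A₀ ⊔ A₁ := by rw [hcompl.sup_eq_top]; trivial
      obtain ⟨x₀, hx₀, x₁, hx₁, rfl⟩ := Submodule.mem_sup.mp hx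
      refine ⟨⟨⟨x₀, hx₀⟩, ⟨x₁ * p, h11 x₁ hx₁ p hp⟩⟩, ?_⟩
      simp only [mul_assoc, hp2, mul_one]
end

section
/- Let A be a semisimple finite-dimensional ℤ₂-graded complex algebra with essential grading (each simple component of type M(n,m) has n,m > 0). Then the functor V₀ ↦ A ⊗_{A₀} V₀, from the category of (ungraded) A₀-modules to the category of graded A-modules, is an isomorphism of categories, with inverse the restriction functor V ↦ V₀. -/
/-- A bundled `ℤ₂`-graded module over a `ℤ₂`-graded `ℂ`-algebra `A`:
a `ℂ`-vector space with an `A`-action and a distinguished pair of subspaces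
(the even and odd parts). -/
structure GModuleBundle (A : Type*) [Ring A] [Algebra ℂ A] where
  carrier : Type
  [acg : AddCommGroup carrier]
  [modC : Module ℂ carrier]
  [modA : Module A carrier]
  [tower : IsScalarTower ℂ A carrier]
  even : Submodule ℂ carrier
  odd : Submodule ℂ carrier

attribute [instance] GModuleBundle.acg GModuleBundle.modC GModuleBundle.modA
  GModuleBundle.tower

variable {A : Type*} [Ring A] [Algebra ℂ A]

/-- `V` is a graded `A`-module: `V = V₀ ⊕ V₁` and `Aᵢ • Vⱼ ⊆ V_{i+j}`. -/
def GModuleBundle.IsGraded (A₀ : Subalgebra ℂ A) (A₁ : Submodule ℂ A)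
    (V : GModuleBundle A) : Prop :=
  IsCompl V.even V.odd ∧
  (∀ a ∈ A₀, ∀ v ∈ V.even, a • v ∈ V.even) ∧
  (∀ a ∈ A₀, ∀ v ∈ V.odd, a • v ∈ V.odd) ∧
  (∀ a ∈ A₁, ∀ v ∈ V.even, a • v ∈ V.odd) ∧
  (∀ a ∈ A₁, ∀ v ∈ V.odd, a • v ∈ V.even)

/-- `V` is a simple (irreducible) graded `A`-module: it is nonzero and has no
nonzero proper `A`-stable graded subspace. -/
def GModuleBundle.IsSimple (V : GModuleBundle A) : Prop :=
  Nontrivial V.carrier ∧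
  ∀ U : Submodule ℂ V.carrier, (∀ a : A, ∀ v ∈ U, a • v ∈ U) →
    (∀ u ∈ U, ∃ u₀ ∈ U, u₀ ∈ V.even ∧ ∃ u₁ ∈ U, u₁ ∈ V.odd ∧ u = u₀ + u₁) →
    U = ⊥ ∨ U = ⊤

/-!
An `A`-submodule generated by an `A₀`-stable subspace `S` of even vectors is `S ⊕ A₁ S`. Applied
to the graph of an `A₀`-linear map `g : V₀ → W₀` inside `V × W`, this shows that the vectors `w`
with `(0, w)` in the `A`-span of the graph form an `A`-module on which `A₁` acts by zero. By
semisimplicity such a module contains a simple submodule, which graded with even part `0` would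
contradict essentialness; so it is zero, and likewise `V / A V₀ = 0`. Hence the span is the graph
of an `A`-linear map, the unique graded extension of `g`.

Conversely, an `A₀`-module `U` is the even part of the coinduced module `Hom_{A₀}(A, U)`, graded
by the maps vanishing on `A₁`, resp. on `A₀`.
-/

structure IsZ2Grading (A₀ : Subalgebra ℂ A) (A₁ : Submodule ℂ A) : Prop where
  isCompl : IsCompl A₀.toSubmodule A₁
  mul_mem_even_odd : ∀ a ∈ A₀, ∀ b ∈ A₁, a * b ∈ A₁
  mul_mem_odd_even : ∀ a ∈ A₁, ∀ b ∈ A₀, a * b ∈ A₁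
  mul_mem_odd_odd : ∀ a ∈ A₁, ∀ b ∈ A₁, a * b ∈ A₀

/-- For semisimple `A` this is the condition that every simple component `M(n,m)` has
`n, m > 0`. -/
def IsEssentialGrading (A₀ : Subalgebra ℂ A) (A₁ : Submodule ℂ A) : Prop :=
  ∀ V : GModuleBundle A, V.IsGraded A₀ A₁ → V.IsSimple → V.even ≠ ⊥ ∧ V.odd ≠ ⊥

open Pointwise

section SpanOfEvenStable

variable {A₀ : Subalgebra ℂ A} {A₁ : Submodule ℂ A} {M : Type*} [AddCommGroup M] [Module ℂ M]
  [Module A M] [IsScalarTower ℂ A M] {S : Submodule ℂ M}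

theorem smul_mem_of_mem_span_odd_smul (hA : IsZ2Grading A₀ A₁)
    (hS : ∀ a ∈ A₀, ∀ x ∈ S, a • x ∈ S) {a : A} (ha : a ∈ A₁) {x : M}
    (hx : x ∈ Submodule.span ℂ ((A₁ : Set A) • (S : Set M))) : a • x ∈ S := by
  refine (Submodule.span_le (p := S.comap (DistribSMul.toLinearMap ℂ M a))).mpr ?_ hx
  rintro _ ⟨b, hb, y, hy, rfl⟩
  change a • b • y ∈ S
  rw [smul_smul]
  exact hS _ (hA.mul_mem_odd_odd a ha b hb) y hy

theorem smul_mem_span_odd_smul (hA : IsZ2Grading A₀ A₁) {a : A} (ha : a ∈ A₀) {x : M}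
    (hx : x ∈ Submodule.span ℂ ((A₁ : Set A) • (S : Set M))) :
    a • x ∈ Submodule.span ℂ ((A₁ : Set A) • (S : Set M)) := by
  refine (Submodule.span_le (p := (Submodule.span ℂ _).comap
    (DistribSMul.toLinearMap ℂ M a))).mpr ?_ hx
  rintro _ ⟨b, hb, y, hy, rfl⟩
  change a • b • y ∈ Submodule.span ℂ ((A₁ : Set A) • (S : Set M))
  rw [smul_smul]
  exact Submodule.subset_span ⟨_, hA.mul_mem_even_odd a ha b hb, y, hy, rfl⟩

theorem mem_sup_span_odd_smul_of_mem_span (hA : IsZ2Grading A₀ A₁)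
    (hS : ∀ a ∈ A₀, ∀ x ∈ S, a • x ∈ S) {x : M} (hx : x ∈ Submodule.span A (S : Set M)) :
    x ∈ S ⊔ Submodule.span ℂ ((A₁ : Set A) • (S : Set M)) := by
  induction hx using Submodule.span_induction with
  | mem x hx => exact Submodule.mem_sup_left hx
  | zero => exact Submodule.zero_mem _
  | add x y _ _ hx hy => exact add_mem hx hy
  | smul a x _ hx =>
    obtain ⟨s, hs, t, ht, rfl⟩ := Submodule.mem_sup.mp hx
    obtain ⟨a₀, ha₀, a₁, ha₁, rfl⟩ :=
      Submodule.mem_sup.mp (hA.isCompl.sup_eq_top ▸ Submodule.mem_top (x := a))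
    rw [add_smul, smul_add, smul_add]
    exact add_mem
      (add_mem (Submodule.mem_sup_left (hS a₀ ha₀ s hs))
        (Submodule.mem_sup_right (smul_mem_span_odd_smul hA ha₀ ht)))
      (add_mem (Submodule.mem_sup_right (Submodule.subset_span ⟨a₁, ha₁, s, hs, rfl⟩))
        (Submodule.mem_sup_left (smul_mem_of_mem_span_odd_smul hA hS ha₁ ht)))

end SpanOfEvenStable

namespace GModuleBundle

theorem isSimple_of_isSimpleModule (V : GModuleBundle A) [IsSimpleModule A V.carrier] :
    V.IsSimple := by
  refine ⟨IsSimpleModule.nontrivial A _, fun U hU _ => ?_⟩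
  let U' : Submodule A V.carrier := { U with smul_mem' := hU }
  have hU' : U = U'.restrictScalars ℂ := rfl
  rcases eq_bot_or_eq_top U' with h | h <;> simp [hU', h]

variable {A₀ : Subalgebra ℂ A} {A₁ : Submodule ℂ A}

/-- A simple submodule killed by `A₁` would be a simple graded module with zero even part. -/
theorem subsingleton_of_odd_smul_eq_zero [IsSemisimpleRing A]
    (hess : IsEssentialGrading A₀ A₁) (M : Type) [AddCommGroup M] [Module ℂ M] [Module A M]
    [IsScalarTower ℂ A M] (hM : ∀ a ∈ A₁, ∀ m : M, a • m = 0) : Subsingleton M := by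
  by_contra hM'
  have : Nontrivial M := not_subsingleton_iff_nontrivial.mp hM'
  obtain ⟨S, hS⟩ := IsSemisimpleModule.exists_simple_submodule A M
  let V : GModuleBundle A := { carrier := S, even := ⊥, odd := ⊤ }
  have hV : V.IsGraded A₀ A₁ := by
    refine ⟨isCompl_bot_top, ?_, fun _ _ _ _ => trivial, fun _ _ _ _ => trivial, ?_⟩
    · rintro a - v (rfl : v = 0)
      exact (Submodule.mem_bot ℂ).mpr (smul_zero a)
    · rintro a ha v -
      exact (Submodule.mem_bot ℂ).mpr (Subtype.ext (hM a ha v))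
  exact (hess V hV V.isSimple_of_isSimpleModule).1 rfl

theorem span_even_eq_top [IsSemisimpleRing A] (hess : IsEssentialGrading A₀ A₁)
    {V : GModuleBundle A} (hV : V.IsGraded A₀ A₁) :
    Submodule.span A (V.even : Set V.carrier) = ⊤ := by
  set N := Submodule.span A (V.even : Set V.carrier)
  suffices Subsingleton (V.carrier ⧸ N) from Submodule.Quotient.subsingleton_iff.mp this
  refine subsingleton_of_odd_smul_eq_zero hess _ fun a ha m => ?_
  obtain ⟨v, rfl⟩ := Submodule.Quotient.mk_surjective N m
  obtain ⟨v₀, hv₀, v₁, hv₁, rfl⟩ :=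
    Submodule.mem_sup.mp (hV.1.sup_eq_top ▸ Submodule.mem_top (x := v))
  rw [← Submodule.Quotient.mk_smul, Submodule.Quotient.mk_eq_zero, smul_add]
  exact add_mem (N.smul_mem a (Submodule.subset_span hv₀))
    (Submodule.subset_span (hV.2.2.2.2 a ha v₁ hv₁))

section Extension

variable {V W : GModuleBundle A}

def evenGraph (g : V.even →ₗ[ℂ] W.even) : Submodule ℂ (V.carrier × W.carrier) :=
  LinearMap.range (V.even.subtype.prod (W.even.subtype ∘ₗ g))

theorem smul_mem_evenGraph (hV : V.IsGraded A₀ A₁) {g : V.even →ₗ[ℂ] W.even}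
    (hg : ∀ (a : A₀) (v v' : V.even), (v' : V.carrier) = (a : A) • (v : V.carrier) →
      (g v' : W.carrier) = (a : A) • (g v : W.carrier))
    {a : A} (ha : a ∈ A₀) {x : V.carrier × W.carrier} (hx : x ∈ evenGraph g) :
    a • x ∈ evenGraph g := by
  obtain ⟨v, rfl⟩ := hx
  exact ⟨⟨a • (v : V.carrier), hV.2.1 a ha v v.2⟩, Prod.ext rfl (hg ⟨a, ha⟩ v _ rfl)⟩

theorem span_odd_smul_evenGraph_le (hV : V.IsGraded A₀ A₁) (hW : W.IsGraded A₀ A₁)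
    (g : V.even →ₗ[ℂ] W.even) :
    Submodule.span ℂ ((A₁ : Set A) • (evenGraph g : Set (V.carrier × W.carrier))) ≤
      V.odd.prod W.odd := by
  rw [Submodule.span_le]
  rintro _ ⟨a, ha, _, ⟨v, rfl⟩, rfl⟩
  exact ⟨hV.2.2.2.1 a ha v v.2, hW.2.2.2.1 a ha (g v) (g v).2⟩

theorem mem_span_odd_smul_evenGraph (hA : IsZ2Grading A₀ A₁) (hV : V.IsGraded A₀ A₁)
    (hW : W.IsGraded A₀ A₁) {g : V.even →ₗ[ℂ] W.even}
    (hg : ∀ (a : A₀) (v v' : V.even), (v' : V.carrier) = (a : A) • (v : V.carrier) →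
      (g v' : W.carrier) = (a : A) • (g v : W.carrier))
    {x : V.carrier × W.carrier} (hx : x ∈ Submodule.span A (evenGraph g : Set _))
    (hx₁ : x.1 ∈ V.odd) :
    x ∈ Submodule.span ℂ ((A₁ : Set A) • (evenGraph g : Set (V.carrier × W.carrier))) := by
  obtain ⟨_, ⟨v, rfl⟩, t, ht, rfl⟩ := Submodule.mem_sup.mp
    (mem_sup_span_odd_smul_of_mem_span hA (fun a ha _ => smul_mem_evenGraph hV hg ha) hx)
  have hv : (v : V.carrier) ∈ V.odd := by
    simpa using V.odd.sub_mem hx₁ (span_odd_smul_evenGraph_le hV hW g ht).1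
  obtain rfl : v = 0 := Subtype.ext ((Submodule.disjoint_def.mp hV.1.disjoint) _ v.2 hv)
  simpa [Prod.mk_zero_zero] using ht

theorem eq_zero_of_mem_span_evenGraph [IsSemisimpleRing A]
    (hess : IsEssentialGrading A₀ A₁) (hA : IsZ2Grading A₀ A₁) (hV : V.IsGraded A₀ A₁)
    (hW : W.IsGraded A₀ A₁) {g : V.even →ₗ[ℂ] W.even}
    (hg : ∀ (a : A₀) (v v' : V.even), (v' : V.carrier) = (a : A) • (v : V.carrier) →
      (g v' : W.carrier) = (a : A) • (g v : W.carrier))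
    {w : W.carrier} (hw : ((0 : V.carrier), w) ∈ Submodule.span A (evenGraph g : Set _)) :
    w = 0 := by
  set K := (Submodule.span A (evenGraph g : Set _)).comap (LinearMap.inr A V.carrier W.carrier)
  have : Subsingleton K := by
    refine subsingleton_of_odd_smul_eq_zero hess K fun a ha m => Subtype.ext ?_
    have hm := mem_span_odd_smul_evenGraph hA hV hW hg m.2 V.odd.zero_mem
    obtain ⟨v, hv⟩ := smul_mem_of_mem_span_odd_smul hA
      (fun _ hb _ => smul_mem_evenGraph hV hg hb) ha hm
    obtain rfl : v = 0 := Subtype.ext (by simpa using congrArg Prod.fst hv)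
    simpa using (congrArg Prod.snd hv).symm
  exact congrArg Subtype.val (Subsingleton.elim (⟨w, hw⟩ : K) 0)

theorem existsUnique_extension [IsSemisimpleRing A] (hess : IsEssentialGrading A₀ A₁)
    (hA : IsZ2Grading A₀ A₁) (hV : V.IsGraded A₀ A₁) (hW : W.IsGraded A₀ A₁)
    (g : V.even →ₗ[ℂ] W.even)
    (hg : ∀ (a : A₀) (v v' : V.even), (v' : V.carrier) = (a : A) • (v : V.carrier) →
      (g v' : W.carrier) = (a : A) • (g v : W.carrier)) :
    ∃! f : V.carrier →ₗ[A] W.carrier,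
      (∀ v ∈ V.even, f v ∈ W.even) ∧ (∀ v ∈ V.odd, f v ∈ W.odd) ∧
      (∀ v : V.even, f (v : V.carrier) = (g v : W.carrier)) := by
  set Γ := Submodule.span A (evenGraph g : Set (V.carrier × W.carrier))
  have hgraph : ∀ v : V.even, ((v : V.carrier), (g v : W.carrier)) ∈ Γ :=
    fun v => Submodule.subset_span ⟨v, rfl⟩
  have hfst_inj : Function.Injective (Prod.fst ∘ Γ.subtype) := by
    rintro ⟨⟨v, w⟩, hx⟩ ⟨⟨v', w'⟩, hy⟩ (rfl : v = v')
    have h0 : ((0 : V.carrier), w - w') ∈ Γ := by simpa using Γ.sub_mem hx hy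
    simp [sub_eq_zero.mp (eq_zero_of_mem_span_evenGraph hess hA hV hW hg h0)]
  have hfst_surj : Function.Surjective (Prod.fst ∘ Γ.subtype) := by
    intro v
    have : Submodule.span A (V.even : Set V.carrier) ≤ Γ.map (LinearMap.fst A _ _) :=
      Submodule.span_le.mpr fun v hv => ⟨_, hgraph ⟨v, hv⟩, rfl⟩
    obtain ⟨x, hx, hxv⟩ := this (span_even_eq_top hess hV ▸ Submodule.mem_top)
    exact ⟨⟨x, hx⟩, hxv⟩
  obtain ⟨f, hf⟩ := Submodule.exists_eq_graph ⟨hfst_inj, hfst_surj⟩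
  have hfg : ∀ v : V.even, f v = g v := fun v =>
    ((LinearMap.mem_graph_iff _ _).mp (hf ▸ hgraph v)).symm
  refine ⟨f, ⟨fun v hv => hfg ⟨v, hv⟩ ▸ (g _).2, fun v hv => ?_, hfg⟩, ?_⟩
  · have hΓ : (v, f v) ∈ Γ := hf ▸ (LinearMap.mem_graph_iff _ _).mpr rfl
    exact (span_odd_smul_evenGraph_le hV hW g (mem_span_odd_smul_evenGraph hA hV hW hg hΓ hv)).2
  · rintro f' ⟨-, -, hf'g⟩
    refine LinearMap.ext_on (span_even_eq_top hess hV) fun v hv => ?_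
    rw [hf'g ⟨v, hv⟩, hfg ⟨v, hv⟩]

end Extension

end GModuleBundle

/-- `GModuleBundle.IsGraded` for modules in any universe. -/
def IsGrading (A₀ : Subalgebra ℂ A) (A₁ : Submodule ℂ A) {M : Type*} [AddCommGroup M]
    [Module ℂ M] [Module A M] (M₀ M₁ : Submodule ℂ M) : Prop :=
  IsCompl M₀ M₁ ∧
  (∀ a ∈ A₀, ∀ v ∈ M₀, a • v ∈ M₀) ∧
  (∀ a ∈ A₀, ∀ v ∈ M₁, a • v ∈ M₁) ∧
  (∀ a ∈ A₁, ∀ v ∈ M₀, a • v ∈ M₁) ∧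
  (∀ a ∈ A₁, ∀ v ∈ M₁, a • v ∈ M₀)

theorem IsGrading.comap {A₀ : Subalgebra ℂ A} {A₁ : Submodule ℂ A} {M N : Type*}
    [AddCommGroup M] [Module ℂ M] [Module A M] [IsScalarTower ℂ A M]
    [AddCommGroup N] [Module ℂ N] [Module A N] [IsScalarTower ℂ A N]
    {M₀ M₁ : Submodule ℂ M} (h : IsGrading A₀ A₁ M₀ M₁) (e : N ≃ₗ[A] M) :
    IsGrading A₀ A₁ (M₀.comap (e.restrictScalars ℂ : N →ₗ[ℂ] M))
      (M₁.comap (e.restrictScalars ℂ : N →ₗ[ℂ] M)) := by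
  have smul_mem_comap {P : A → Prop} {M₀ M₁ : Submodule ℂ M}
      (hP : ∀ a, P a → ∀ v ∈ M₀, a • v ∈ M₁) (a : A) (ha : P a) (v : N)
      (hv : v ∈ M₀.comap (e.restrictScalars ℂ : N →ₗ[ℂ] M)) :
      a • v ∈ M₁.comap (e.restrictScalars ℂ : N →ₗ[ℂ] M) := by
    simpa using hP a ha _ hv
  exact ⟨(Submodule.orderIsoMapComap (e.restrictScalars ℂ)).symm.isCompl h.1,
    smul_mem_comap h.2.1, smul_mem_comap h.2.2.1, smul_mem_comap h.2.2.2.1,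
    smul_mem_comap h.2.2.2.2⟩

section Coinduced

variable {A₀ : Subalgebra ℂ A} {A₁ : Submodule ℂ A}

theorem IsZ2Grading.projection_mul (hA : IsZ2Grading A₀ A₁) {s : A} (hs : s ∈ A₀) (b : A) :
    A₀.toSubmodule.projection A₁ hA.isCompl (s * b) =
      s * A₀.toSubmodule.projection A₁ hA.isCompl b := by
  set π := A₀.toSubmodule.projection A₁ hA.isCompl
  have h₀ : s * π b ∈ A₀ := A₀.mul_mem hs (Submodule.projection_apply_mem hA.isCompl b)
  have h₁ : s * (b - π b) ∈ A₁ :=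
    hA.mul_mem_even_odd s hs _ (Submodule.sub_projection_mem _ b)
  calc π (s * b) = π (s * π b + s * (b - π b)) := by rw [← mul_add, add_sub_cancel]
    _ = s * π b := by
      rw [map_add, Submodule.projection_apply_of_mem_left _ h₀,
        Submodule.projection_apply_of_mem_right _ h₁, add_zero]

noncomputable def IsZ2Grading.evenProj (hA : IsZ2Grading A₀ A₁) : A →ₗ[A₀] A₀ where
  toFun b :=
    ⟨A₀.toSubmodule.projection A₁ hA.isCompl b, Submodule.projection_apply_mem hA.isCompl b⟩
  map_add' b c := Subtype.ext (map_add _ b c)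
  map_smul' s b := Subtype.ext (hA.projection_mul s.2 b)

theorem IsZ2Grading.evenProj_of_mem_even (hA : IsZ2Grading A₀ A₁) {b : A} (hb : b ∈ A₀) :
    hA.evenProj b = ⟨b, hb⟩ :=
  Subtype.ext (Submodule.projection_apply_of_mem_left hA.isCompl (x := b) hb)

theorem IsZ2Grading.evenProj_of_mem_odd (hA : IsZ2Grading A₀ A₁) {b : A} (hb : b ∈ A₁) :
    hA.evenProj b = 0 :=
  Subtype.ext (Submodule.projection_apply_of_mem_right hA.isCompl hb)

variable (A₀) (U : Type*) [AddCommGroup U] [Module A₀ U]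

/-- The coinduced module: `a : A` acts on `Hom_{A₀}(A, U)` through the right multiplication
`b ↦ b * a` of the source, encoded as the `DomMulAct` of `Aᵐᵒᵖ`. -/
abbrev coinducedModule : Module A (A →ₗ[A₀] U) :=
  Module.compHom _ (
    { toFun := fun a => DomMulAct.mk (MulOpposite.op a)
      map_one' := rfl
      map_mul' := fun _ _ => rfl
      map_zero' := rfl
      map_add' := fun _ _ => rfl } : A →+* (Aᵐᵒᵖ)ᵈᵐᵃ)

attribute [local instance] coinducedModule

theorem coinduced_smul_apply (a : A) (f : A →ₗ[A₀] U) (b : A) : (a • f) b = f (b * a) := rfl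

variable [Module ℂ U] [IsScalarTower ℂ A₀ U]

instance : IsScalarTower ℂ A (A →ₗ[A₀] U) where
  smul_assoc c a f := LinearMap.ext fun b => by
    rw [coinduced_smul_apply, mul_smul_comm, LinearMap.map_smul_of_tower]
    rfl

def vanishingOn (P : Submodule ℂ A) : Submodule ℂ (A →ₗ[A₀] U) where
  carrier := {f | ∀ b ∈ P, f b = 0}
  add_mem' hf hg b hb := by simp [hf b hb, hg b hb]
  zero_mem' _ _ := rfl
  smul_mem' c f hf b hb := by simp [hf b hb]

variable {A₀ U}

theorem smul_mem_vanishingOn {P Q : Submodule ℂ A} {a : A} (h : ∀ b ∈ Q, b * a ∈ P)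
    {f : A →ₗ[A₀] U} (hf : f ∈ vanishingOn A₀ U P) : a • f ∈ vanishingOn A₀ U Q :=
  fun b hb => hf _ (h b hb)

theorem IsZ2Grading.eq_smulRight_of_mem_vanishingOn (hA : IsZ2Grading A₀ A₁)
    {f : A →ₗ[A₀] U} (hf : f ∈ vanishingOn A₀ U A₁) : f = hA.evenProj.smulRight (f 1) := by
  ext b
  have hb : b = hA.evenProj b • (1 : A) + (b - A₀.toSubmodule.projection A₁ hA.isCompl b) := by
    rw [Subalgebra.smul_def, smul_eq_mul, mul_one]
    exact (add_sub_cancel _ b).symm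
  conv_lhs => rw [hb]
  rw [map_add, map_smul, hf _ (Submodule.sub_projection_mem hA.isCompl b), add_zero,
    LinearMap.smulRight_apply]

theorem IsZ2Grading.smulRight_mem_vanishingOn (hA : IsZ2Grading A₀ A₁) (u : U) :
    hA.evenProj.smulRight u ∈ vanishingOn A₀ U A₁ := fun b hb => by
  simp [hA.evenProj_of_mem_odd hb]

theorem IsZ2Grading.isGrading_vanishingOn (hA : IsZ2Grading A₀ A₁) :
    IsGrading A₀ A₁ (vanishingOn A₀ U A₁) (vanishingOn A₀ U A₀.toSubmodule) := by
  refine ⟨⟨?_, ?_⟩,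
    fun a ha _ => smul_mem_vanishingOn fun b hb => hA.mul_mem_odd_even b hb a ha,
    fun a ha _ => smul_mem_vanishingOn fun b hb => A₀.mul_mem hb ha,
    fun a ha _ => smul_mem_vanishingOn fun b hb => hA.mul_mem_even_odd b hb a ha,
    fun a ha _ => smul_mem_vanishingOn fun b hb => hA.mul_mem_odd_odd b hb a ha⟩
  · refine Submodule.disjoint_def.mpr fun f hf₁ hf₀ => ?_
    rw [hA.eq_smulRight_of_mem_vanishingOn hf₁, hf₀ 1 A₀.one_mem]
    ext
    simp
  · refine codisjoint_iff_le_sup.mpr fun f _ => Submodule.mem_sup.mpr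
      ⟨_, hA.smulRight_mem_vanishingOn (f 1), f - hA.evenProj.smulRight (f 1), fun b hb => ?_,
        add_sub_cancel _ _⟩
    rw [LinearMap.sub_apply, LinearMap.smulRight_apply, hA.evenProj_of_mem_even hb, ← map_smul,
      Subalgebra.smul_def, smul_eq_mul, mul_one, sub_self]

noncomputable def IsZ2Grading.vanishingOnOddEquiv (hA : IsZ2Grading A₀ A₁) :
    vanishingOn A₀ U A₁ ≃ₗ[ℂ] U where
  toFun f := (f : A →ₗ[A₀] U) 1
  map_add' _ _ := rfl
  map_smul' _ _ := rfl
  invFun u := ⟨hA.evenProj.smulRight u, hA.smulRight_mem_vanishingOn u⟩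
  left_inv f := Subtype.ext (hA.eq_smulRight_of_mem_vanishingOn f.2).symm
  right_inv u := by
    change hA.evenProj.smulRight u 1 = u
    rw [LinearMap.smulRight_apply, hA.evenProj_of_mem_even A₀.one_mem]
    exact one_smul A₀ u

end Coinduced

theorem GModuleBundle.exists_isGraded_even_equiv [FiniteDimensional ℂ A]
    {A₀ : Subalgebra ℂ A} {A₁ : Submodule ℂ A} (hA : IsZ2Grading A₀ A₁)
    (U : Type) [AddCommGroup U] [Module ℂ U] [Module A₀ U] [IsScalarTower ℂ A₀ U] :
    ∃ V : GModuleBundle A, V.IsGraded A₀ A₁ ∧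
      ∃ e : V.even ≃ₗ[ℂ] U, ∀ (a : A₀) (v v' : V.even),
        (v' : V.carrier) = (a : A) • (v : V.carrier) → e v' = a • e v := by
  let _ := coinducedModule A₀ U
  have : Small.{0} A := Module.Finite.small ℂ A
  have : Small.{0} (A →ₗ[A₀] U) := small_of_injective DFunLike.coe_injective
  let e := Shrink.linearEquiv A (A →ₗ[A₀] U)
  have : IsScalarTower ℂ A (Shrink.{0} (A →ₗ[A₀] U)) :=
    (Shrink.linearEquiv ℂ (A →ₗ[A₀] U)).isScalarTower (A := A)
  let eℂ : Shrink.{0} (A →ₗ[A₀] U) →ₗ[ℂ] (A →ₗ[A₀] U) := e.restrictScalars ℂ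
  refine ⟨{ carrier := Shrink.{0} (A →ₗ[A₀] U)
            even := (vanishingOn A₀ U A₁).comap eℂ
            odd := (vanishingOn A₀ U A₀.toSubmodule).comap eℂ },
    hA.isGrading_vanishingOn.comap e,
    ((e.restrictScalars ℂ).ofSubmodule' _).trans hA.vanishingOnOddEquiv, ?_⟩
  rintro a v v' hv'
  change (e v' : A →ₗ[A₀] U) 1 = a • (e v : A →ₗ[A₀] U) 1
  rw [hv', map_smul, coinduced_smul_apply, one_mul, ← map_smul, Subalgebra.smul_def, smul_eq_mul,
    mul_one]

/-- Let `A = A₀ ⊕ A₁` be a semisimple finite-dimensional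
`ℤ₂`-graded complex algebra with essential grading (every simple graded `A`-module
has nonzero even and odd parts; this is equivalent to each simple component of type
`M(n,m)` having `n, m > 0`).  Then the functor `V₀ ↦ A ⊗_{A₀} V₀` from ungraded
`A₀`-modules to graded `A`-modules is an isomorphism of categories, with inverse the
restriction functor `V ↦ V₀`.  Equivalently, the restriction functor `V ↦ V₀` is an
isomorphism of categories:
(a) it is fully faithful: every `A₀`-linear map `V₀ → W₀` between the even parts of
graded `A`-modules extends uniquely to a grading-preserving `A`-linear map `V → W`;
(b) it is bijective on objects up to isomorphism: every `A₀`-module is the even part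
of some graded `A`-module (whose underlying object is `A ⊗_{A₀} V₀`). -/
theorem stmt11 [FiniteDimensional ℂ A] (hss : IsSemisimpleRing A)
    (A₀ : Subalgebra ℂ A) (A₁ : Submodule ℂ A)
    (hcompl : IsCompl A₀.toSubmodule A₁)
    (h01 : ∀ a ∈ A₀, ∀ b ∈ A₁, a * b ∈ A₁)
    (h10 : ∀ a ∈ A₁, ∀ b ∈ A₀, a * b ∈ A₁)
    (h11 : ∀ a ∈ A₁, ∀ b ∈ A₁, a * b ∈ A₀)
    (hess : ∀ V : GModuleBundle A, V.IsGraded A₀ A₁ → V.IsSimple →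
      V.even ≠ ⊥ ∧ V.odd ≠ ⊥) :
    -- (a) full faithfulness of the restriction functor
    (∀ V W : GModuleBundle A, V.IsGraded A₀ A₁ → W.IsGraded A₀ A₁ →
      ∀ g : ↥V.even →ₗ[ℂ] ↥W.even,
        (∀ (a : ↥A₀) (v v' : ↥V.even), (v' : V.carrier) = (a : A) • (v : V.carrier) →
          (g v' : W.carrier) = (a : A) • (g v : W.carrier)) →
        ∃! f : V.carrier →ₗ[A] W.carrier,
          (∀ v ∈ V.even, f v ∈ W.even) ∧ (∀ v ∈ V.odd, f v ∈ W.odd) ∧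
          (∀ v : ↥V.even, f (v : V.carrier) = (g v : W.carrier))) ∧
    -- (b) essential surjectivity (bijectivity on objects): every `A₀`-module is the
    -- even part of a graded `A`-module
    (∀ (U : Type) [AddCommGroup U] [Module ℂ U] [Module ↥A₀ U] [IsScalarTower ℂ ↥A₀ U],
      ∃ V : GModuleBundle A, V.IsGraded A₀ A₁ ∧
        ∃ e : ↥V.even ≃ₗ[ℂ] U,
          ∀ (a : ↥A₀) (v v' : ↥V.even), (v' : V.carrier) = (a : A) • (v : V.carrier) →
            e v' = a • e v) := by
  have hA : IsZ2Grading A₀ A₁ := ⟨hcompl, h01, h10, h11⟩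
  exact ⟨fun V W hV hW g hg => GModuleBundle.existsUnique_extension hess hA hV hW g hg,
    fun U _ _ _ _ => GModuleBundle.exists_isGraded_even_equiv hA U⟩
end

section
/- For a semisimple finite-dimensional ℤ₂-graded complex algebra A, the supercenter SZ(A) = {a ∈ A homogeneous : ab = (−1)^{p(a)p(b)}ba for all homogeneous b ∈ A} coincides with the even part of the ordinary center of A. -/
/-- For a semisimple finite-dimensional `ℤ₂`-graded complex algebra
`A = A₀ ⊕ A₁`, the supercenter
`SZ(A) = {a homogeneous | a·b = (-1)^{p(a)p(b)} b·a for all homogeneous b}`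
coincides with the even part of the ordinary center of `A`. -/
theorem stmt13 {A : Type*} [Ring A] [Algebra ℂ A] [FiniteDimensional ℂ A]
    (A₀ A₁ : Submodule ℂ A)
    (hcompl : IsCompl A₀ A₁)
    (h00 : ∀ a ∈ A₀, ∀ b ∈ A₀, a * b ∈ A₀)
    (h01 : ∀ a ∈ A₀, ∀ b ∈ A₁, a * b ∈ A₁)
    (h10 : ∀ a ∈ A₁, ∀ b ∈ A₀, a * b ∈ A₁)
    (h11 : ∀ a ∈ A₁, ∀ b ∈ A₁, a * b ∈ A₀)
    (hss : IsSemisimpleRing A) :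
    {a : A |
        (a ∈ A₀ ∧ (∀ b ∈ A₀, a * b = b * a) ∧ (∀ b ∈ A₁, a * b = b * a)) ∨
        (a ∈ A₁ ∧ (∀ b ∈ A₀, a * b = b * a) ∧ (∀ b ∈ A₁, a * b = -(b * a)))} =
      {a : A | a ∈ A₀ ∧ ∀ b : A, a * b = b * a} := by
  have hdec : ∀ b : A, ∃ x ∈ A₀, ∃ y ∈ A₁, b = x + y := by
    intro b
    have hb : b ∈ A₀ ⊔ A₁ := by rw [hcompl.sup_eq_top]; trivial
    obtain ⟨x, hx, y, hy, hxy⟩ := Submodule.mem_sup.mp hb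
    exact ⟨x, hx, y, hy, hxy.symm⟩
  ext a
  simp only [Set.mem_setOf_eq]
  constructor
  · rintro (⟨h0, hc0, hc1⟩ | ⟨h1, hc0, hc1⟩)
    · refine ⟨h0, fun b => ?_⟩
      obtain ⟨x, hx, y, hy, rfl⟩ := hdec b
      rw [mul_add, add_mul, hc0 x hx, hc1 y hy]
    · -- odd supercentral elements are zero in a semisimple algebra
      have hsq : a * a = 0 := by
        have h := hc1 a h1
        have h2 : (2 : ℂ) • (a * a) = 0 := by
          have h' : a * a + a * a = 0 := by nth_rewrite 1 [h]; exact neg_add_cancel _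
          rw [two_smul]; exact h'
        rcases smul_eq_zero.mp h2 with h' | h'
        · exact absurd h' two_ne_zero
        · exact h'
      have hkey : ∀ c : A, a * c * a = 0 := by
        intro c
        obtain ⟨x, hx, y, hy, rfl⟩ := hdec c
        have h : a * (x + y) = (x - y) * a := by
          rw [mul_add, hc0 x hx, hc1 y hy, sub_mul]; abel
        rw [h, mul_assoc, hsq, mul_zero]
      have ha0 : a = 0 := by
        set I : Submodule A A := Submodule.span A {a} with hI
        obtain ⟨J, hJ⟩ := exists_isCompl I
        obtain ⟨e, he, f, hf, hef⟩ : ∃ e ∈ I, ∃ f ∈ J, (1 : A) = e + f := by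
          have h1' : (1 : A) ∈ I ⊔ J := by rw [hJ.sup_eq_top]; trivial
          obtain ⟨x, hx, y, hy, hxy⟩ := Submodule.mem_sup.mp h1'
          exact ⟨x, hx, y, hy, hxy.symm⟩
        have haI : a ∈ I := Submodule.mem_span_singleton_self a
        have hae : a * e ∈ I := I.smul_mem a he
        have haf : a * f ∈ J := J.smul_mem a hf
        have hsum : a = a * e + a * f := by
          calc a = a * 1 := (mul_one a).symm
          _ = a * e + a * f := by rw [hef, mul_add]
        have hfI : a * f ∈ I := by
          have h' : a * f = a - a * e := eq_sub_of_add_eq' hsum.symm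
          rw [h']; exact I.sub_mem haI hae
        have hf0 : a * f = 0 := by
          have : a * f ∈ I ⊓ J := ⟨hfI, haf⟩
          rwa [hJ.inf_eq_bot, Submodule.mem_bot] at this
        have hae' : a = a * e := by rw [hf0, add_zero] at hsum; exact hsum
        obtain ⟨c, hc⟩ := Submodule.mem_span_singleton.mp he
        have h' : a = a * c * a := by
          conv_lhs => rw [hae', ← hc, smul_eq_mul, ← mul_assoc]
        exact h'.trans (hkey c)
      subst ha0
      exact ⟨A₀.zero_mem, fun b => by simp⟩
  · rintro ⟨h0, hc⟩
    exact Or.inl ⟨h0, fun b _ => hc b, fun b _ => hc b⟩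
end

section
/- Let f : A → B be a surjective homomorphism of semisimple ℤ₂-graded algebras and C a graded subalgebra of A. Then f(SZ(A,C)) = SZ(f(A), f(C)), i.e., the image of the supercentralizer of C in A equals the supercentralizer of f(C) in f(A). -/
/-- Let `f : A → B` be a surjective grading-preserving homomorphism
of finite-dimensional semisimple `ℤ₂`-graded complex algebras, and let `C` be a
graded subalgebra of `A`.  Then `f(SZ(A,C)) = SZ(f(A), f(C))`: the image of the
supercentralizer of `C` in `A` equals the supercentralizer of `f(C)` in `f(A) = B`. -/
theorem stmt15 {A B : Type*} [Ring A] [Algebra ℂ A] [Ring B] [Algebra ℂ B]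
    [FiniteDimensional ℂ A] [FiniteDimensional ℂ B]
    (A₀ A₁ : Submodule ℂ A) (B₀ B₁ : Submodule ℂ B)
    (hcomplA : IsCompl A₀ A₁) (hcomplB : IsCompl B₀ B₁)
    (hA00 : ∀ a ∈ A₀, ∀ b ∈ A₀, a * b ∈ A₀) (hA01 : ∀ a ∈ A₀, ∀ b ∈ A₁, a * b ∈ A₁)
    (hA10 : ∀ a ∈ A₁, ∀ b ∈ A₀, a * b ∈ A₁) (hA11 : ∀ a ∈ A₁, ∀ b ∈ A₁, a * b ∈ A₀)
    (hB00 : ∀ a ∈ B₀, ∀ b ∈ B₀, a * b ∈ B₀) (hB01 : ∀ a ∈ B₀, ∀ b ∈ B₁, a * b ∈ B₁)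
    (hB10 : ∀ a ∈ B₁, ∀ b ∈ B₀, a * b ∈ B₁) (hB11 : ∀ a ∈ B₁, ∀ b ∈ B₁, a * b ∈ B₀)
    (hssA : IsSemisimpleRing A) (hssB : IsSemisimpleRing B)
    (f : A →ₐ[ℂ] B) (hfsurj : Function.Surjective f)
    (hf0 : ∀ a ∈ A₀, f a ∈ B₀) (hf1 : ∀ a ∈ A₁, f a ∈ B₁)
    (C : Subalgebra ℂ A)
    (hCgr : ∀ c ∈ C, ∃ c₀ ∈ C, c₀ ∈ A₀ ∧ ∃ c₁ ∈ C, c₁ ∈ A₁ ∧ c = c₀ + c₁) :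
    f '' {a : A | ∃ a₀ ∈ A₀, ∃ a₁ ∈ A₁, a = a₀ + a₁ ∧
        (∀ c ∈ C, c ∈ A₀ → a₀ * c = c * a₀ ∧ a₁ * c = c * a₁) ∧
        (∀ c ∈ C, c ∈ A₁ → a₀ * c = c * a₀ ∧ a₁ * c = -(c * a₁))} =
      {b : B | ∃ b₀ ∈ B₀, ∃ b₁ ∈ B₁, b = b₀ + b₁ ∧
        (∀ y ∈ C.map f, y ∈ B₀ → b₀ * y = y * b₀ ∧ b₁ * y = y * b₁) ∧
        (∀ y ∈ C.map f, y ∈ B₁ → b₀ * y = y * b₀ ∧ b₁ * y = -(y * b₁))} := by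
  haveI := hssA
  -- uniqueness of graded decompositions
  have uniqA : ∀ y ∈ A₀, ∀ z ∈ A₁, y + z = 0 → y = 0 ∧ z = 0 := by
    intro y hy z hz h
    have hy' : y = -z := eq_neg_of_add_eq_zero_left h
    have : y ∈ A₀ ⊓ A₁ := ⟨hy, by rw [hy']; exact A₁.neg_mem hz⟩
    rw [hcomplA.inf_eq_bot] at this
    have hy0 : y = 0 := this
    refine ⟨hy0, ?_⟩
    rw [hy0, zero_add] at h
    exact h
  have uniqB : ∀ y ∈ B₀, ∀ z ∈ B₁, y + z = 0 → y = 0 ∧ z = 0 := by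
    intro y hy z hz h
    have hy' : y = -z := eq_neg_of_add_eq_zero_left h
    have : y ∈ B₀ ⊓ B₁ := ⟨hy, by rw [hy']; exact B₁.neg_mem hz⟩
    rw [hcomplB.inf_eq_bot] at this
    have hy0 : y = 0 := this
    refine ⟨hy0, ?_⟩
    rw [hy0, zero_add] at h
    exact h
  have decompA : ∀ x : A, ∃ x₀ ∈ A₀, ∃ x₁ ∈ A₁, x = x₀ + x₁ := by
    intro x
    have hx : x ∈ A₀ ⊔ A₁ := by rw [hcomplA.sup_eq_top]; trivial
    obtain ⟨x₀, h0, x₁, h1, h⟩ := Submodule.mem_sup.mp hx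
    exact ⟨x₀, h0, x₁, h1, h.symm⟩
  -- the kernel ideal
  set I : Ideal A := RingHom.ker (f : A →+* B) with hIdef
  have memI : ∀ x : A, x ∈ I ↔ f x = 0 := fun x => RingHom.mem_ker
  have Imulr : ∀ x ∈ I, ∀ a : A, x * a ∈ I := by
    intro x hx a
    rw [memI] at hx ⊢
    rw [map_mul, hx, zero_mul]
  obtain ⟨e, he, hIe⟩ := IsSemisimpleRing.ideal_eq_span_idempotent I
  have heI : e ∈ I := by rw [hIe]; exact Ideal.subset_span rfl
  have hre : ∀ x ∈ I, x * e = x := by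
    intro x hx
    rw [hIe] at hx
    obtain ⟨a, rfl⟩ := Submodule.mem_span_singleton.mp hx
    rw [smul_eq_mul, mul_assoc, he]
  have hle : ∀ x ∈ I, e * x = x := by
    intro x hx
    set z := x - e * x with hzdef
    have hzI : z ∈ I := I.sub_mem hx (I.mul_mem_left e hx)
    have hze : z * e = z := hre z hzI
    have hez : e * z = 0 := by
      rw [hzdef, mul_sub, ← mul_assoc, he, sub_self]
    obtain ⟨g, hg, hspan⟩ := IsSemisimpleRing.ideal_eq_span_idempotent (Ideal.span {z})
    have hgmem : g ∈ Ideal.span {z} := by rw [hspan]; exact Ideal.subset_span rfl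
    obtain ⟨b, hb⟩ := Submodule.mem_span_singleton.mp hgmem
    rw [smul_eq_mul] at hb
    have hw : (z * b) * z = 0 := by
      have hwI : z * b ∈ I := Imulr z hzI b
      calc (z * b) * z = ((z * b) * e) * z := by rw [hre _ hwI]
        _ = (z * b) * (e * z) := by rw [mul_assoc]
        _ = 0 := by rw [hez, mul_zero]
    have hg0 : g = 0 := by
      have hgg : g * g = 0 := by
        rw [← hb]
        calc (b * z) * (b * z) = b * ((z * b) * z) := by
              rw [mul_assoc, ← mul_assoc z b z]
          _ = 0 := by rw [hw, mul_zero]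
      rw [← hg, hgg]
    have hz0 : z = 0 := by
      have hzmem : z ∈ Ideal.span {g} := by rw [← hspan]; exact Ideal.subset_span rfl
      rw [hg0] at hzmem
      obtain ⟨a, ha⟩ := Submodule.mem_span_singleton.mp hzmem
      rw [smul_zero] at ha
      exact ha.symm
    have hx0 : x - e * x = 0 := hz0
    exact (sub_eq_zero.mp hx0).symm
  have hcen : ∀ a : A, e * a = a * e := by
    intro a
    have h1 : a * e ∈ I := I.mul_mem_left a heI
    have h2 : e * a ∈ I := Imulr e heI a
    calc e * a = (e * a) * e := (hre _ h2).symm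
      _ = e * (a * e) := by rw [mul_assoc]
      _ = a * e := hle _ h1
  -- the kernel is graded
  have kerGr : ∀ x₀ ∈ A₀, ∀ x₁ ∈ A₁, x₀ + x₁ ∈ I → x₀ ∈ I ∧ x₁ ∈ I := by
    intro x₀ h0 x₁ h1 h
    have hsum : f x₀ + f x₁ = 0 := by rw [← map_add]; exact (memI _).mp h
    obtain ⟨h2, h3⟩ := uniqB _ (hf0 _ h0) _ (hf1 _ h1) hsum
    exact ⟨(memI _).mpr h2, (memI _).mpr h3⟩
  -- e is even
  obtain ⟨e₀, he0, e₁, he1, hee⟩ := decompA e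
  obtain ⟨he0I, he1I⟩ := kerGr e₀ he0 e₁ he1 (by rw [← hee]; exact heI)
  have k1 : e₀ * e₁ + e₁ * e₁ = e₁ := by
    have h := hle e₁ he1I
    rw [hee, add_mul] at h
    exact h
  have k1' : e₀ * e₁ = e₁ := by
    have hmem0 : e₁ * e₁ ∈ A₀ := hA11 _ he1 _ he1
    have hmem1 : e₀ * e₁ - e₁ ∈ A₁ := A₁.sub_mem (hA01 _ he0 _ he1) he1
    have hk := (uniqA _ hmem0 _ hmem1 (by
      rw [add_sub, add_comm (e₁ * e₁) (e₀ * e₁), k1, sub_self])).2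
    exact sub_eq_zero.mp hk
  have k2 : e₀ * e₀ + e₀ * e₁ = e₀ := by
    have h := hre e₀ he0I
    rw [hee, mul_add] at h
    exact h
  have k2' : e₀ * e₁ = 0 := by
    have hmem0 : e₀ * e₀ - e₀ ∈ A₀ := A₀.sub_mem (hA00 _ he0 _ he0) he0
    have hmem1 : e₀ * e₁ ∈ A₁ := hA01 _ he0 _ he1
    exact (uniqA _ hmem0 _ hmem1 (by
      rw [sub_add_eq_add_sub, k2, sub_self])).2
  have he10 : e₁ = 0 := by rw [← k1', k2']
  have heA0 : e ∈ A₀ := by rw [hee, he10, add_zero]; exact he0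
  -- homogeneous preimages
  have pre0 : ∀ b ∈ B₀, ∃ u ∈ A₀, f u = b := by
    intro b hb
    obtain ⟨x, rfl⟩ := hfsurj b
    obtain ⟨x₀, h0, x₁, h1, rfl⟩ := decompA x
    refine ⟨x₀, h0, ?_⟩
    have hsum : (f x₀ - f (x₀ + x₁)) + f x₁ = 0 := by rw [map_add]; abel
    have h2 := (uniqB _ (B₀.sub_mem (hf0 _ h0) hb) _ (hf1 _ h1) hsum).1
    exact sub_eq_zero.mp h2
  have pre1 : ∀ b ∈ B₁, ∃ v ∈ A₁, f v = b := by
    intro b hb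
    obtain ⟨x, rfl⟩ := hfsurj b
    obtain ⟨x₀, h0, x₁, h1, rfl⟩ := decompA x
    refine ⟨x₁, h1, ?_⟩
    have hsum : f x₀ + (f x₁ - f (x₀ + x₁)) = 0 := by rw [map_add]; abel
    have h2 := (uniqB _ (hf0 _ h0) _ (B₁.sub_mem (hf1 _ h1) hb) hsum).2
    exact sub_eq_zero.mp h2
  -- correction lemmas
  have commL : ∀ u c : A, u * c - c * u ∈ I → (u - e * u) * c = c * (u - e * u) := by
    intro u c hd
    have h1 : e * (u * c - c * u) = u * c - c * u := hle _ hd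
    have h2 : e * c = c * e := hcen c
    have key : (u - e * u) * c - c * (u - e * u)
        = ((u * c - c * u) - e * (u * c - c * u)) + ((c * e) - (e * c)) * u := by
      noncomm_ring
    rw [h1, h2, sub_self, sub_self, zero_mul, add_zero] at key
    exact sub_eq_zero.mp key
  have commR : ∀ v c : A, v * c + c * v ∈ I → (v - e * v) * c = -(c * (v - e * v)) := by
    intro v c hd
    have h1 : e * (v * c + c * v) = v * c + c * v := hle _ hd
    have h2 : e * c = c * e := hcen c
    have key : (v - e * v) * c + c * (v - e * v)
        = ((v * c + c * v) - e * (v * c + c * v)) + ((e * c) - (c * e)) * v := by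
      noncomm_ring
    rw [h1, h2, sub_self, sub_self, zero_mul, add_zero] at key
    exact eq_neg_of_add_eq_zero_left key
  -- homogeneous image elements have homogeneous representatives
  have repr0 : ∀ y ∈ C.map f, y ∈ B₀ → ∃ c ∈ C, c ∈ A₀ ∧ f c = y := by
    intro y hy hyB
    obtain ⟨c, hc, rfl⟩ := Subalgebra.mem_map.mp hy
    obtain ⟨c₀, hc₀C, hc₀A, c₁, hc₁C, hc₁A, rfl⟩ := hCgr c hc
    refine ⟨c₀, hc₀C, hc₀A, ?_⟩
    have hsum : (f c₀ - f (c₀ + c₁)) + f c₁ = 0 := by rw [map_add]; abel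
    have h2 := (uniqB _ (B₀.sub_mem (hf0 _ hc₀A) hyB) _ (hf1 _ hc₁A) hsum).1
    exact sub_eq_zero.mp h2
  have repr1 : ∀ y ∈ C.map f, y ∈ B₁ → ∃ c ∈ C, c ∈ A₁ ∧ f c = y := by
    intro y hy hyB
    obtain ⟨c, hc, rfl⟩ := Subalgebra.mem_map.mp hy
    obtain ⟨c₀, hc₀C, hc₀A, c₁, hc₁C, hc₁A, rfl⟩ := hCgr c hc
    refine ⟨c₁, hc₁C, hc₁A, ?_⟩
    have hsum : f c₀ + (f c₁ - f (c₀ + c₁)) = 0 := by rw [map_add]; abel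
    have h2 := (uniqB _ (hf0 _ hc₀A) _ (B₁.sub_mem (hf1 _ hc₁A) hyB) hsum).2
    exact sub_eq_zero.mp h2
  ext b
  constructor
  · rintro ⟨a, ⟨a₀, ha₀, a₁, ha₁, rfl, hc0, hc1⟩, rfl⟩
    refine ⟨f a₀, hf0 _ ha₀, f a₁, hf1 _ ha₁, (map_add f a₀ a₁), ?_, ?_⟩
    · intro y hy hyB
      obtain ⟨c, hcC, hcA, rfl⟩ := repr0 y hy hyB
      obtain ⟨p, q⟩ := hc0 c hcC hcA
      constructor
      · rw [← map_mul, ← map_mul, p]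
      · rw [← map_mul, ← map_mul, q]
    · intro y hy hyB
      obtain ⟨c, hcC, hcA, rfl⟩ := repr1 y hy hyB
      obtain ⟨p, q⟩ := hc1 c hcC hcA
      constructor
      · rw [← map_mul, ← map_mul, p]
      · rw [← map_mul, ← map_mul, q, map_neg]
  · rintro ⟨b₀, hb₀, b₁, hb₁, rfl, hy0, hy1⟩
    obtain ⟨u, huA, hfu⟩ := pre0 b₀ hb₀
    obtain ⟨v, hvA, hfv⟩ := pre1 b₁ hb₁
    have hfe : f e = 0 := (memI e).mp heI
    have hfa₀ : f (u - e * u) = b₀ := by rw [map_sub, map_mul, hfe, zero_mul, sub_zero, hfu]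
    have hfa₁ : f (v - e * v) = b₁ := by rw [map_sub, map_mul, hfe, zero_mul, sub_zero, hfv]
    refine ⟨(u - e * u) + (v - e * v),
      ⟨u - e * u, A₀.sub_mem huA (hA00 _ heA0 _ huA),
       v - e * v, A₁.sub_mem hvA (hA01 _ heA0 _ hvA), rfl, ?_, ?_⟩,
      by rw [map_add, hfa₀, hfa₁]⟩
    · intro c hcC hcA
      have hyC : f c ∈ C.map f := Subalgebra.mem_map.mpr ⟨c, hcC, rfl⟩
      have hyB : f c ∈ B₀ := hf0 _ hcA
      obtain ⟨p, q⟩ := hy0 (f c) hyC hyB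
      constructor
      · exact commL u c ((memI _).mpr (by rw [map_sub, map_mul, map_mul, hfu, p, sub_self]))
      · exact commL v c ((memI _).mpr (by rw [map_sub, map_mul, map_mul, hfv, q, sub_self]))
    · intro c hcC hcA
      have hyC : f c ∈ C.map f := Subalgebra.mem_map.mpr ⟨c, hcC, rfl⟩
      have hyB : f c ∈ B₁ := hf1 _ hcA
      obtain ⟨p, q⟩ := hy1 (f c) hyC hyB
      constructor
      · exact commL u c ((memI _).mpr (by rw [map_sub, map_mul, map_mul, hfu, p, sub_self]))
      · exact commR v c ((memI _).mpr (by
          rw [map_add, map_mul, map_mul, hfv, q]; abel))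
end

section
/- In the algebra 𝔄ₙ generated by τ₁,…,τ_{n−1} with relations τₖ² = 1, τₖτ_{k+1}τₖ = τ_{k+1}τₖτ_{k+1}, and τₖτₗ = −τₗτₖ for |k−l| > 1, the elements τ_{ij} (defined by τ_{i,i+1} = τᵢ and τ_{ij} = −τ_{i,j−1} τ_{j−1} τ_{i,j−1} for j > i+1, with τ_{ji} = −τ_{ij}) satisfy: τ_{ij}² = 1; τ_{ij}τ_{kl} = −τ_{kl}τ_{ij} whenever {i,j} ∩ {k,l} = ∅; and τ_{ij}τ_{jk}τ_{ij} = τ_{jk}τ_{ij}τ_{jk} = −τ_{ik} for pairwise distinct i,j,k. -/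
/-- `tauAux τ i k` is the odd transposition `τ_{i, i+k}` of the projective symmetric
group algebra, defined by `τ_{i,i+1} = τᵢ` and
`τ_{i,j} = -τ_{i,j-1} · τ_{j-1} · τ_{i,j-1}`. -/
def tauAux {R : Type*} [Ring R] (τ : ℕ → R) (i : ℕ) : ℕ → R
  | 0 => 0
  | 1 => τ i
  | (k + 2) => -(tauAux τ i (k + 1) * τ (i + k + 1) * tauAux τ i (k + 1))

/-- The odd transposition `τ_{ij}`, with `τ_{ji} = -τ_{ij}` for `i < j`. -/
def tau2 {R : Type*} [Ring R] (τ : ℕ → R) (i j : ℕ) : R :=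
  if i ≤ j then tauAux τ i (j - i) else -(tauAux τ j (i - j))

section
variable {R : Type*} [Ring R] (τ : ℕ → R)

lemma tauAux_one (i : ℕ) : tauAux τ i 1 = τ i := rfl
lemma tauAux_add_two (i k : ℕ) :
    tauAux τ i (k+2) = -(tauAux τ i (k + 1) * τ (i + k + 1) * tauAux τ i (k + 1)) := rfl

lemma mulext {a b c : R} (h : a * b = c) : ∀ x : R, a * (b * x) = c * x := by
  intro x; rw [← mul_assoc, h]

lemma mulext1 {a b : R} (h : a * b = 1) : ∀ x : R, a * (b * x) = x := by
  intro x; rw [← mul_assoc, h, one_mul]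

lemma mulext3 {a b c d e f : R} (h : a*b*c = d*e*f) : ∀ x : R, a*(b*(c*x)) = d*(e*(f*x)) := by
  intro x
  rw [← mul_assoc, ← mul_assoc, h, mul_assoc, mul_assoc]

lemma swap_move {a b : R} (h : a * b = -(b*a)) : ∀ x : R, a*(b*x) = -(b*(a*x)) := by
  intro x; rw [← mul_assoc, h, neg_mul, mul_assoc]

lemma conj_right {x a b : R} (hx : x*x = 1) (h : a*x = b) : a = b*x := by
  rw [← h, mul_assoc, hx, mul_one]

lemma conj_left {x a b : R} (hx : x*x = 1) (h : x*a = b) : a = x*b := by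
  rw [← h, ← mul_assoc, hx, one_mul]

variable (n : ℕ)
variable (hsq : ∀ k, 1 ≤ k → k + 1 ≤ n → τ k * τ k = 1)
variable (hbraid : ∀ k, 1 ≤ k → k + 2 ≤ n →
      τ k * τ (k + 1) * τ k = τ (k + 1) * τ k * τ (k + 1))
variable (hanti : ∀ k l, 1 ≤ k → k + 1 ≤ n → 1 ≤ l → l + 1 ≤ n →
      (k + 1 < l ∨ l + 1 < k) → τ k * τ l = -(τ l * τ k))

include hsq in
lemma tauAux_sq : ∀ m i, 1 ≤ m → 1 ≤ i → i + m ≤ n → tauAux τ i m * tauAux τ i m = 1 := by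
  intro m
  induction m using Nat.strong_induction_on with
  | _ m IH =>
    match m with
    | 0 => intro i h; omega
    | 1 => intro i _ hi hin; exact hsq i hi hin
    | (k+2) =>
      intro i _ hi hin
      have hT := IH (k+1) (by omega) i (by omega) (by omega) (by omega)
      have hu := hsq (i+k+1) (by omega) (by omega)
      rw [tauAux_add_two]
      simp only [neg_mul, mul_neg, neg_neg, mul_assoc]
      simp only [mulext hT, mulext hu, one_mul, hT, hu]

include hsq hbraid hanti in
lemma pkg : ∀ m i, 1 ≤ i → i + m + 1 ≤ n →
    (∀ l, 1 ≤ l → l + 1 ≤ n → (l + 1 < i ∨ i + m + 1 < l ∨ (i < l ∧ l < i + m)) →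
       τ l * tauAux τ i (m+1) = -(tauAux τ i (m+1) * τ l)) ∧
    (i + m + 2 ≤ n → τ (i+m+1) * tauAux τ i (m+1) * τ (i+m+1) = -(tauAux τ i (m+2))) ∧
    (1 ≤ m → τ (i+m) * tauAux τ i (m+1) * τ (i+m) = -(tauAux τ i m)) ∧
    (1 ≤ m → τ i * tauAux τ i (m+1) * τ i = -(tauAux τ (i+1) m)) ∧
    (2 ≤ i → τ (i-1) * tauAux τ i (m+1) * τ (i-1) = -(tauAux τ (i-1) (m+2))) := by
  intro m
  induction m using Nat.strong_induction_on with
  | _ m IH =>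
    match m with
    | 0 =>
      intro i hi hin
      refine ⟨?_, ?_, by omega, by omega, ?_⟩
      · -- C1 base
        intro l hl hln hcond
        rw [tauAux_one]
        exact hanti l i hl hln hi (by omega) (by omega)
      · -- C2 base: braid
        intro hn
        show τ (i+1) * tauAux τ i 1 * τ (i+1) = -(tauAux τ i 2)
        rw [tauAux_one, tauAux_add_two, tauAux_one, neg_neg,
          show i + 0 + 1 = i + 1 from rfl]
        exact (hbraid i hi (by omega)).symm
      · -- C5 base
        intro hi2
        obtain ⟨j, rfl⟩ : ∃ j, i = j + 2 := ⟨i - 2, by omega⟩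
        show τ (j+1) * tauAux τ (j+2) 1 * τ (j+1) = -(tauAux τ (j+1) 2)
        rw [tauAux_one, tauAux_add_two, tauAux_one, neg_neg,
          show j + 1 + 0 + 1 = j + 2 from rfl]
    | (k+1) =>
      intro i hi hin
      -- abbreviations
      set T := tauAux τ i (k+1) with hTdef'
      set u := τ (i+k+1) with hudef
      have hTT : T * T = 1 := tauAux_sq τ n hsq (k+1) i (by omega) hi (by omega)
      have huu : u * u = 1 := hsq (i+k+1) (by omega) (by omega)
      obtain ⟨hC1k, hC2k, hC3k, hC4k, hC5k⟩ := IH k (by omega) i hi (by omega)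
      have hA : tauAux τ i (k+1+1) = -(T * u * T) := tauAux_add_two τ i k
      -- u T u = T u T
      have hbrT : u * T * u = T * u * T := by
        have h := hC2k (by omega)
        rw [hA] at h; rw [h, neg_neg]
      refine ⟨?_, ?_, ?_, ?_, ?_⟩
      · -- C1 step
        intro l hl hln hcond
        rw [hA]
        by_cases hlik : l = i + k
        · -- special case l = i + k
          subst hlik
          have hk1 : 1 ≤ k := by omega
          obtain ⟨k', rfl⟩ : ∃ k', k = k' + 1 := ⟨k - 1, by omega⟩
          set w := τ (i+k'+1) with hwdef
          set S := tauAux τ i (k'+1) with hSdef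
          have hww : w * w = 1 := hsq (i+k'+1) (by omega) (by omega)
          have hTSW : T = -(S * w * S) := tauAux_add_two τ i k'
          have hwTw : w * T * w = -S := by
            have h := hC3k (by omega)
            show w * T * w = -S
            convert h using 3 <;> omega
          have huS : u * S = -(S * u) := by
            have h := (IH k' (by omega) i hi (by omega)).1 (i+k'+1+1) (by omega) (by omega)
              (by right; left; omega)
            show u * S = -(S*u)
            convert h using 3 <;> omega
          have hwT : w * T = -(S * w) := by
            have := conj_right hww hwTw
            rw [this, neg_mul]
          have hTw : T * w = -(w * S) := by
            have h : w * (T * w) = -S := by rw [← mul_assoc]; exact hwTw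
            have := conj_left hww h
            rw [this, mul_neg]
          have huT : u * T = S * (u * (w * S)) := by
            rw [hTSW]
            simp only [mul_neg, neg_mul, neg_neg, mul_assoc]
            rw [swap_move huS]
            simp only [neg_mul, mul_neg, neg_neg]
          show w * -(T*u*T) = -(-(T*u*T) * w)
          simp only [mul_neg, neg_mul, neg_neg, mul_assoc]
          rw [huT, mulext hwT, hTw, hTSW]
          simp only [mul_neg, neg_mul, neg_neg, mul_assoc]
        · -- far case
          have hlT : τ l * T = -(T * τ l) := hC1k l hl hln (by omega)
          have hlu : τ l * u = -(u * τ l) :=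
            hanti l (i+k+1) hl hln (by omega) (by omega) (by omega)
          simp only [mul_neg, neg_mul, neg_neg, neg_inj, mul_assoc]
          rw [swap_move hlT, swap_move hlu, hlT]
          simp only [neg_mul, mul_neg, neg_neg]
      · -- C2 step
        intro hn2
        set v := τ (i+(k+1)+1) with hvdef
        have hvv : v * v = 1 := hsq (i+k+2) (by omega) (by omega)
        have hvT : v * T = -(T * v) := hC1k (i+k+2) (by omega) (by omega) (by omega)
        have hTv : T * v = -(v * T) := by rw [hvT]; simp
        have hbr2 : u * v * u = v * u * v := hbraid (i+k+1) (by omega) (by omega)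
        show v * tauAux τ i (k+2) * v = -(tauAux τ i (k+3))
        rw [show tauAux τ i (k+3) = -(tauAux τ i (k+2) * τ (i+k+2) * tauAux τ i (k+2)) from
          tauAux_add_two τ i (k+1)]
        rw [show tauAux τ i (k+2) = -(T*u*T) from hA]
        show v * -(T*u*T) * v = -(-(-(T*u*T) * v * -(T*u*T)))
        simp only [mul_neg, neg_mul, neg_neg, mul_assoc]
        rw [swap_move hTv, mulext1 hTT]
        simp only [mul_neg, neg_mul, neg_neg]
        rw [mulext3 hbr2, swap_move hTv]
        simp only [mul_neg, neg_mul, neg_neg]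
        rw [hvT]
        simp only [mul_neg, neg_mul, neg_neg]
      · -- C3 step
        intro _
        show u * tauAux τ i (k+2) * u = -T
        rw [show tauAux τ i (k+2) = -(T*u*T) from hA]
        simp only [mul_neg, neg_mul, neg_neg, mul_assoc]
        rw [mulext3 hbrT, mulext1 hTT, huu, mul_one]
      · -- C4 step
        intro _
        rcases Nat.eq_zero_or_pos k with hk0 | hkpos
        · subst hk0
          have hii : τ i * τ i = 1 := hsq i hi (by omega)
          show τ i * tauAux τ i 2 * τ i = -(tauAux τ (i+1) 1)
          rw [tauAux_add_two, tauAux_one, tauAux_one]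
          show τ i * -(τ i * τ (i+1) * τ i) * τ i = -(τ (i+1))
          simp only [mul_neg, neg_mul, neg_neg, mul_assoc, neg_inj, mulext1 hii, hii, mul_one]
        · obtain ⟨k', rfl⟩ : ∃ k', k = k' + 1 := ⟨k - 1, by omega⟩
          set S' := tauAux τ (i+1) (k'+1) with hS'def
          have hii : τ i * τ i = 1 := hsq i hi (by omega)
          have hiT : τ i * T * τ i = -S' := hC4k (by omega)
          have hiu : τ i * u = -(u * τ i) :=
            hanti i (i+k'+1+1) hi (by omega) (by omega) (by omega) (by omega)
          have hTi : T * τ i = -(τ i * S') := by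
            have h : τ i * (T * τ i) = -S' := by rw [← mul_assoc]; exact hiT
            have := conj_left hii h
            rw [this, mul_neg]
          have hgoalR : tauAux τ (i+1) (k'+2) = -(S' * u * S') := by
            rw [tauAux_add_two]
            rw [show i+1+k'+1 = i + (k'+1) + 1 by omega]
          show τ i * tauAux τ i (k'+3) * τ i = -(tauAux τ (i+1) (k'+2))
          have hui : u * τ i = -(τ i * u) := by rw [hiu, neg_neg]
          rw [hgoalR, show tauAux τ i (k'+3) = -(T*u*T) from hA]
          simp only [mul_neg, neg_mul, neg_neg, mul_assoc]
          rw [hTi]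
          simp only [mul_neg, neg_mul, neg_neg]
          rw [swap_move hui]
          simp only [mul_neg, neg_mul, neg_neg]
          rw [mulext hTi]
          simp only [mul_neg, neg_mul, neg_neg, mul_assoc, mulext1 hii]
      · -- C5 step
        intro hi2
        set w' := τ (i-1) with hw'def
        have hw'w' : w' * w' = 1 := hsq (i-1) (by omega) (by omega)
        set P := tauAux τ (i-1) (k+2) with hPdef
        have hP : w' * T * w' = -P := hC5k hi2
        have hw'u : w' * u = -(u * w') :=
          hanti (i-1) (i+k+1) (by omega) (by omega) (by omega) (by omega) (by omega)
        have hTw' : T * w' = -(w' * P) := by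
          have h : w' * (T * w') = -P := by rw [← mul_assoc]; exact hP
          have := conj_left hw'w' h
          rw [this, mul_neg]
        have hw'T : w' * T = -(P * w') := by
          have := conj_right hw'w' hP
          rw [this, neg_mul]
        have hgoalR : tauAux τ (i-1) (k+3) = -(P * u * P) := by
          rw [tauAux_add_two]
          rw [show i-1+(k+1)+1 = i + k + 1 by omega]
        show w' * tauAux τ i (k+2) * w' = -(tauAux τ (i-1) (k+3))
        rw [hgoalR, show tauAux τ i (k+2) = -(T*u*T) from hA]
        simp only [mul_neg, neg_mul, neg_neg, mul_assoc]
        rw [show T * (u * (T * w')) = T * (u * -(w' * P)) by rw [hTw']]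
        simp only [mul_neg, neg_neg]
        rw [show u * (w' * P) = -(w' * (u * P)) from by
          rw [← mul_assoc, show u * w' = -(w' * u) from by rw [hw'u]; simp, neg_mul, mul_assoc]]
        simp only [mul_neg, neg_neg]
        rw [mulext hw'T]
        simp only [neg_mul, mul_neg, neg_neg, mul_assoc, mulext1 hw'w']

lemma tau2_eq_tauAux (a m : ℕ) : tau2 τ a (a+m) = tauAux τ a m := by
  simp [tau2]

lemma tau2_antisymm {a b : ℕ} (h : a ≠ b) : tau2 τ b a = -(tau2 τ a b) := by
  rcases lt_or_gt_of_ne h with h' | h'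
  · simp [tau2, Nat.not_le.2 h', Nat.le_of_lt h']
  · simp [tau2, Nat.not_le.2 h', Nat.le_of_lt h']

include hsq hbraid hanti in
lemma conj_gen_lt : ∀ p a m, 1 ≤ p → p + 1 ≤ n → 1 ≤ a → a + m + 1 ≤ n →
    τ p * tauAux τ a (m+1) * τ p =
      -(tau2 τ (Equiv.swap p (p+1) a) (Equiv.swap p (p+1) (a+m+1))) := by
  intro p a m hp hpn ha hb
  obtain ⟨hC1, hC2, hC3, hC4, hC5⟩ := pkg τ n hsq hbraid hanti m a ha hb
  have hpp : τ p * τ p = 1 := hsq p hp hpn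
  by_cases hd : (p + 1 < a ∨ a + m + 1 < p ∨ (a < p ∧ p < a + m))
  · -- p disjoint from both endpoints
    rw [Equiv.swap_apply_of_ne_of_ne (by omega) (by omega),
      Equiv.swap_apply_of_ne_of_ne (by omega) (by omega)]
    rw [show a + m + 1 = a + (m+1) from rfl, tau2_eq_tauAux]
    have h := hC1 p hp hpn (by omega)
    rw [h, neg_mul, mul_assoc, hpp, mul_one]
  · have hcase : p + 1 = a ∨ p = a ∨ (p = a + m ∧ 1 ≤ m) ∨ p = a + m + 1 := by omega
    rcases hcase with hc | hc | ⟨hc, hm⟩ | hc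
    · -- p = a - 1
      obtain rfl : a = p + 1 := by omega
      rw [Equiv.swap_apply_right,
        Equiv.swap_apply_of_ne_of_ne (by omega) (by omega)]
      rw [show p + 1 + m + 1 = p + (m+2) by omega, tau2_eq_tauAux]
      have h := hC5 (by omega)
      rw [show p + 1 - 1 = p from rfl] at h
      exact h
    · -- p = a
      subst hc
      rcases Nat.eq_zero_or_pos m with rfl | hm
      · rw [Equiv.swap_apply_left, show p + 0 + 1 = p + 1 from rfl,
          Equiv.swap_apply_right]
        rw [tau2_antisymm τ (show p ≠ p + 1 by omega), neg_neg,
          show p + 1 = p + (0+1) from rfl, tau2_eq_tauAux, tauAux_one]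
        rw [hpp, one_mul]
      · rw [Equiv.swap_apply_left,
          Equiv.swap_apply_of_ne_of_ne (by omega) (by omega)]
        obtain ⟨m', rfl⟩ : ∃ m', m = m' + 1 := ⟨m - 1, by omega⟩
        rw [show p + (m'+1) + 1 = (p + 1) + (m'+1) by omega, tau2_eq_tauAux]
        exact hC4 (by omega)
    · -- p = a + m
      subst hc
      rw [Equiv.swap_apply_of_ne_of_ne (by omega) (by omega),
        Equiv.swap_apply_right]
      rw [show a + m = a + m from rfl, tau2_eq_tauAux]
      exact hC3 hm
    · -- p = a + m + 1
      subst hc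
      rw [Equiv.swap_apply_of_ne_of_ne (by omega) (by omega),
        Equiv.swap_apply_left]
      rw [show a + m + 1 + 1 = a + (m + 2) by omega, tau2_eq_tauAux]
      exact hC2 (by omega)

include hsq hbraid hanti in
lemma conj_gen : ∀ p a b, 1 ≤ p → p + 1 ≤ n → 1 ≤ a → a ≤ n → 1 ≤ b → b ≤ n → a ≠ b →
    τ p * tau2 τ a b * τ p =
      -(tau2 τ (Equiv.swap p (p+1) a) (Equiv.swap p (p+1) b)) := by
  intro p a b hp hpn ha han hb hbn hab
  rcases lt_or_gt_of_ne hab with h | h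
  · obtain ⟨m, rfl⟩ : ∃ m, b = a + m + 1 := ⟨b - a - 1, by omega⟩
    rw [show a + m + 1 = a + (m+1) from rfl, tau2_eq_tauAux]
    exact conj_gen_lt τ n hsq hbraid hanti p a m hp hpn ha (by omega)
  · obtain ⟨m, rfl⟩ : ∃ m, a = b + m + 1 := ⟨a - b - 1, by omega⟩
    have key : τ p * tau2 τ b (b + m + 1) * τ p =
        -(tau2 τ (Equiv.swap p (p+1) b) (Equiv.swap p (p+1) (b + m + 1))) := by
      rw [show b + m + 1 = b + (m+1) from rfl, tau2_eq_tauAux]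
      exact conj_gen_lt τ n hsq hbraid hanti p b m hp hpn hb (by omega)
    rw [tau2_antisymm τ (show b ≠ b + m + 1 by omega)]
    rw [tau2_antisymm τ (show Equiv.swap p (p+1) b ≠ Equiv.swap p (p+1) (b+m+1) from
      (Equiv.injective _).ne (by omega))]
    simp only [mul_neg, neg_mul, neg_neg]
    rw [key, neg_neg]

lemma swap_range {N p q x : ℕ} (hp : 1 ≤ p) (hpn : p ≤ N) (hq : 1 ≤ q) (hqn : q ≤ N)
    (hx : 1 ≤ x) (hxn : x ≤ N) :
    1 ≤ Equiv.swap p q x ∧ Equiv.swap p q x ≤ N := by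
  rw [Equiv.swap_apply_def]
  split_ifs <;> omega

lemma swap_comp {p q r x : ℕ} (h1 : r ≠ p) (h2 : r ≠ q) :
    Equiv.swap p q (Equiv.swap q r (Equiv.swap p q x)) = Equiv.swap p r x := by
  simp only [Equiv.swap_apply_def]
  split_ifs <;> omega

include hsq hbraid hanti in
lemma conj2aux : ∀ g p a b, 1 ≤ g → 1 ≤ p → p + g ≤ n → 1 ≤ a → a ≤ n → 1 ≤ b → b ≤ n →
    a ≠ b →
    tau2 τ p (p+g) * tau2 τ a b * tau2 τ p (p+g) =
      -(tau2 τ (Equiv.swap p (p+g) a) (Equiv.swap p (p+g) b)) := by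
  intro g
  induction g using Nat.strong_induction_on with
  | _ g IH =>
    match g with
    | 0 => intro p a b h; omega
    | 1 =>
      intro p a b _ hp hpn ha han hb hbn hab
      rw [tau2_eq_tauAux, tauAux_one]
      exact conj_gen τ n hsq hbraid hanti p a b hp hpn ha han hb hbn hab
    | (k+2) =>
      intro p a b _ hp hpn ha han hb hbn hab
      set f := Equiv.swap p (p+(k+1)) with hfdef
      set t := τ (p+k+1) with htdef
      have hfa1 : 1 ≤ f a ∧ f a ≤ n := swap_range hp (by omega) (by omega) (by omega) ha han
      have hfb1 : 1 ≤ f b ∧ f b ≤ n := swap_range hp (by omega) (by omega) (by omega) hb hbn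
      have hfab : f a ≠ f b := (Equiv.injective _).ne hab
      have e1 : tau2 τ p (p+(k+1)) * tau2 τ a b * tau2 τ p (p+(k+1)) =
          -(tau2 τ (f a) (f b)) :=
        IH (k+1) (by omega) p a b (by omega) hp (by omega) ha han hb hbn hab
      have e2 : t * tau2 τ (f a) (f b) * t =
          -(tau2 τ (Equiv.swap (p+k+1) (p+k+1+1) (f a)) (Equiv.swap (p+k+1) (p+k+1+1) (f b))) :=
        conj_gen τ n hsq hbraid hanti (p+k+1) (f a) (f b) (by omega) (by omega)
          hfa1.1 hfa1.2 hfb1.1 hfb1.2 hfab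
      set g2 := Equiv.swap (p+k+1) (p+k+1+1) with hg2def
      have hga1 : 1 ≤ g2 (f a) ∧ g2 (f a) ≤ n :=
        swap_range (by omega) (by omega) (by omega) (by omega) hfa1.1 hfa1.2
      have hgb1 : 1 ≤ g2 (f b) ∧ g2 (f b) ≤ n :=
        swap_range (by omega) (by omega) (by omega) (by omega) hfb1.1 hfb1.2
      have hgab : g2 (f a) ≠ g2 (f b) := (Equiv.injective _).ne hfab
      have e3 : tau2 τ p (p+(k+1)) * tau2 τ (g2 (f a)) (g2 (f b)) * tau2 τ p (p+(k+1)) =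
          -(tau2 τ (f (g2 (f a))) (f (g2 (f b)))) :=
        IH (k+1) (by omega) p _ _ (by omega) hp (by omega) hga1.1 hga1.2 hgb1.1 hgb1.2 hgab
      have hswap : ∀ x, f (g2 (f x)) = Equiv.swap p (p+(k+2)) x := by
        intro x
        rw [hfdef, hg2def]
        rw [show p+k+1 = p+(k+1) from rfl, show p+(k+1)+1 = p+(k+2) from rfl]
        exact swap_comp (by omega) (by omega)
      -- unfold the conjugator
      have hX : tau2 τ p (p+(k+2)) =
          -(tau2 τ p (p+(k+1)) * t * tau2 τ p (p+(k+1))) := by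
        rw [tau2_eq_tauAux, tau2_eq_tauAux, tauAux_add_two]
      set S := tau2 τ p (p+(k+1)) with hSdef
      set Y := tau2 τ a b with hYdef
      calc tau2 τ p (p+(k+2)) * Y * tau2 τ p (p+(k+2))
          = (S*t*S) * Y * (S*t*S) := by rw [hX]; noncomm_ring
        _ = S*t*(S*Y*S)*t*S := by noncomm_ring
        _ = S*t*(-(tau2 τ (f a) (f b)))*t*S := by rw [e1]
        _ = -(S*(t * tau2 τ (f a) (f b) * t)*S) := by noncomm_ring
        _ = -(S*(-(tau2 τ (g2 (f a)) (g2 (f b))))*S) := by rw [e2]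
        _ = S * tau2 τ (g2 (f a)) (g2 (f b)) * S := by noncomm_ring
        _ = -(tau2 τ (f (g2 (f a))) (f (g2 (f b)))) := e3
        _ = -(tau2 τ (Equiv.swap p (p+(k+2)) a) (Equiv.swap p (p+(k+2)) b)) := by
            rw [hswap, hswap]

include hsq hbraid hanti in
lemma conj2 : ∀ p q a b, 1 ≤ p → p ≤ n → 1 ≤ q → q ≤ n → 1 ≤ a → a ≤ n → 1 ≤ b → b ≤ n →
    p ≠ q → a ≠ b →
    tau2 τ p q * tau2 τ a b * tau2 τ p q =
      -(tau2 τ (Equiv.swap p q a) (Equiv.swap p q b)) := by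
  intro p q a b hp hpn hq hqn ha han hb hbn hpq hab
  rcases lt_or_gt_of_ne hpq with h | h
  · obtain ⟨g, rfl⟩ : ∃ g, q = p + g := ⟨q - p, by omega⟩
    exact conj2aux τ n hsq hbraid hanti g p a b (by omega) hp (by omega) ha han hb hbn hab
  · obtain ⟨g, rfl⟩ : ∃ g, p = q + g := ⟨p - q, by omega⟩
    have key := conj2aux τ n hsq hbraid hanti g q a b (by omega) hq (by omega) ha han hb hbn hab
    rw [tau2_antisymm τ (show q ≠ q + g by omega)]
    rw [Equiv.swap_comm]
    calc -(tau2 τ q (q+g)) * tau2 τ a b * -(tau2 τ q (q+g))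
        = tau2 τ q (q+g) * tau2 τ a b * tau2 τ q (q+g) := by noncomm_ring
      _ = -(tau2 τ (Equiv.swap q (q+g) a) (Equiv.swap q (q+g) b)) := key

include hsq in
lemma tau2_sq : ∀ a b, 1 ≤ a → a ≤ n → 1 ≤ b → b ≤ n → a ≠ b →
    tau2 τ a b * tau2 τ a b = 1 := by
  intro a b ha han hb hbn hab
  rcases lt_or_gt_of_ne hab with h | h
  · obtain ⟨m, rfl⟩ : ∃ m, b = a + m := ⟨b - a, by omega⟩
    rw [tau2_eq_tauAux]
    exact tauAux_sq τ n hsq m a (by omega) ha (by omega)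
  · obtain ⟨m, rfl⟩ : ∃ m, a = b + m := ⟨a - b, by omega⟩
    rw [tau2_antisymm τ (show b ≠ b + m by omega), tau2_eq_tauAux, neg_mul_neg]
    exact tauAux_sq τ n hsq m b (by omega) hb (by omega)
end


/-- In the algebra `𝔄ₙ` generated by `τ₁, …, τ_{n-1}` with relations
`τₖ² = 1`, `τₖτ_{k+1}τₖ = τ_{k+1}τₖτ_{k+1}` and `τₖτₗ = -τₗτₖ` for `|k-l| > 1`
(equivalently: in any ring with elements satisfying these relations), the elements
`τ_{ij}` satisfy `τ_{ij}² = 1`, `τ_{ij}τ_{kl} = -τ_{kl}τ_{ij}` whenever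
`{i,j} ∩ {k,l} = ∅`, and `τ_{ij}τ_{jk}τ_{ij} = τ_{jk}τ_{ij}τ_{jk} = -τ_{ik}` for
pairwise distinct `i, j, k`. -/
theorem stmt16 {R : Type*} [Ring R] (n : ℕ) (τ : ℕ → R)
    (hsq : ∀ k, 1 ≤ k → k ≤ n - 1 → τ k ^ 2 = 1)
    (hbraid : ∀ k, 1 ≤ k → k + 1 ≤ n - 1 →
      τ k * τ (k + 1) * τ k = τ (k + 1) * τ k * τ (k + 1))
    (hanti : ∀ k l, 1 ≤ k → k ≤ n - 1 → 1 ≤ l → l ≤ n - 1 →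
      (k + 1 < l ∨ l + 1 < k) → τ k * τ l = -(τ l * τ k)) :
    (∀ i j, 1 ≤ i → i ≤ n → 1 ≤ j → j ≤ n → i ≠ j → tau2 τ i j ^ 2 = 1) ∧
    (∀ i j k l, 1 ≤ i → i ≤ n → 1 ≤ j → j ≤ n → 1 ≤ k → k ≤ n → 1 ≤ l → l ≤ n →
      i ≠ j → k ≠ l → i ≠ k → i ≠ l → j ≠ k → j ≠ l →
      tau2 τ i j * tau2 τ k l = -(tau2 τ k l * tau2 τ i j)) ∧
    (∀ i j k, 1 ≤ i → i ≤ n → 1 ≤ j → j ≤ n → 1 ≤ k → k ≤ n →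
      i ≠ j → j ≠ k → i ≠ k →
      tau2 τ i j * tau2 τ j k * tau2 τ i j = tau2 τ j k * tau2 τ i j * tau2 τ j k ∧
      tau2 τ i j * tau2 τ j k * tau2 τ i j = -(tau2 τ i k)) := by
  have hsq' : ∀ k, 1 ≤ k → k + 1 ≤ n → τ k * τ k = 1 := by
    intro k h1 h2
    have := hsq k h1 (by omega)
    rwa [pow_two] at this
  have hbraid' : ∀ k, 1 ≤ k → k + 2 ≤ n →
      τ k * τ (k + 1) * τ k = τ (k + 1) * τ k * τ (k + 1) := by
    intro k h1 h2; exact hbraid k h1 (by omega)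
  have hanti' : ∀ k l, 1 ≤ k → k + 1 ≤ n → 1 ≤ l → l + 1 ≤ n →
      (k + 1 < l ∨ l + 1 < k) → τ k * τ l = -(τ l * τ k) := by
    intro k l h1 h2 h3 h4 h5; exact hanti k l h1 (by omega) h3 (by omega) h5
  refine ⟨?_, ?_, ?_⟩
  · intro i j hi hin hj hjn hij
    rw [pow_two]
    exact tau2_sq τ n hsq' i j hi hin hj hjn hij
  · intro i j k l hi hin hj hjn hk hkn hl hln hij hkl hik hil hjk hjl
    have hXX : tau2 τ k l * tau2 τ k l = 1 := tau2_sq τ n hsq' k l hk hkn hl hln hkl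
    have h := conj2 τ n hsq' hbraid' hanti' k l i j hk hkn hl hln hi hin hj hjn hkl hij
    rw [Equiv.swap_apply_of_ne_of_ne hik hil, Equiv.swap_apply_of_ne_of_ne hjk hjl] at h
    calc tau2 τ i j * tau2 τ k l
        = tau2 τ k l * (tau2 τ k l * tau2 τ i j * tau2 τ k l) := by
          rw [show tau2 τ k l * (tau2 τ k l * tau2 τ i j * tau2 τ k l) =
            (tau2 τ k l * tau2 τ k l) * (tau2 τ i j * tau2 τ k l) by noncomm_ring,
            hXX, one_mul]
      _ = tau2 τ k l * (-(tau2 τ i j)) := by rw [h]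
      _ = -(tau2 τ k l * tau2 τ i j) := by rw [mul_neg]
  · intro i j k hi hin hj hjn hk hkn hij hjk hik
    have h1 := conj2 τ n hsq' hbraid' hanti' i j j k hi hin hj hjn hj hjn hk hkn hij hjk
    rw [Equiv.swap_apply_right, Equiv.swap_apply_of_ne_of_ne (Ne.symm hik) (Ne.symm hjk)] at h1
    have h2 := conj2 τ n hsq' hbraid' hanti' j k i j hj hjn hk hkn hi hin hj hjn hjk hij
    rw [Equiv.swap_apply_left, Equiv.swap_apply_of_ne_of_ne hij hik] at h2
    exact ⟨h1.trans h2.symm, h1⟩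
end

section
/- In the algebra 𝔄ₙ, the odd Young–Jucys–Murphy elements πₖ = τ_{1k} + τ_{2k} + ⋯ + τ_{k−1,k} (with π₁ = 0) satisfy τᵢπᵢ + π_{i+1}τᵢ = 1 and (πᵢ − π_{i+1})τᵢ = τᵢ(πᵢ − π_{i+1}) for all i = 1,…,n−1. -/
/-- The odd Young–Jucys–Murphy element `πₖ = τ_{1k} + τ_{2k} + ⋯ + τ_{k-1,k}`
(with `π₁ = 0`). -/
def piYJM {R : Type*} [Ring R] (τ : ℕ → R) (k : ℕ) : R :=
  ∑ j ∈ Finset.Ico 1 k, tau2 τ j k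

theorem tauAux_sq_s17 {R : Type*} [Ring R] {n : ℕ} {τ : ℕ → R}
    (hsq : ∀ k, 1 ≤ k → k ≤ n - 1 → τ k ^ 2 = 1) :
    ∀ k j, 1 ≤ j → 1 ≤ k → j + k - 1 ≤ n - 1 →
      tauAux τ j k * tauAux τ j k = 1 := by
  intro k
  induction k using Nat.strong_induction_on with
  | _ k ih =>
  intro j hj hk hle
  rcases k with _ | _ | k
  · omega
  · have := hsq j hj (by omega)
    rwa [pow_two] at this
  · have ha := ih (k + 1) (by omega) j hj (by omega) (by omega)
    have hm : τ (j + k + 1) * τ (j + k + 1) = 1 := by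
      have := hsq (j + k + 1) (by omega) (by omega)
      rwa [pow_two] at this
    set a := tauAux τ j (k + 1) with hadef
    show -(a * τ (j + k + 1) * a) * -(a * τ (j + k + 1) * a) = 1
    simp only [neg_mul, mul_neg, neg_neg, mul_assoc]
    have h1 : a * (a * (τ (j + k + 1) * a)) = τ (j + k + 1) * a := by
      rw [← mul_assoc, ha, one_mul]
    rw [h1, ← mul_assoc (τ (j + k + 1)), hm, one_mul, ha]

theorem tauAux_anti {R : Type*} [Ring R] {n : ℕ} {τ : ℕ → R}
    (hanti : ∀ k l, 1 ≤ k → k ≤ n - 1 → 1 ≤ l → l ≤ n - 1 →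
      (k + 1 < l ∨ l + 1 < k) → τ k * τ l = -(τ l * τ k)) :
    ∀ k j i, 1 ≤ j → 1 ≤ k → j + k < i → i ≤ n - 1 →
      tauAux τ j k * τ i = -(τ i * tauAux τ j k) := by
  intro k
  induction k using Nat.strong_induction_on with
  | _ k ih =>
  intro j i hj hk hji hin
  rcases k with _ | _ | k
  · omega
  · exact hanti j i hj (by omega) (by omega) hin (Or.inl (by omega))
  · have ha := ih (k + 1) (by omega) j i hj (by omega) (by omega) hin
    have hm := hanti (j + k + 1) i (by omega) (by omega) (by omega) hin (Or.inl (by omega))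
    set a := tauAux τ j (k + 1) with hadef
    show -(a * τ (j + k + 1) * a) * τ i = -(τ i * -(a * τ (j + k + 1) * a))
    simp only [neg_mul, mul_neg, neg_neg, mul_assoc]
    rw [ha]
    simp only [mul_neg, neg_neg]
    rw [← mul_assoc (τ (j + k + 1)), hm]
    simp only [neg_mul, mul_neg, neg_neg, mul_assoc]
    rw [← mul_assoc a (τ i), ha]
    simp only [neg_mul, neg_neg, mul_assoc]

/-- key identity: `τ_{j,i+1} = -(τᵢ τ_{j,i} τᵢ)` for `j < i`. -/
theorem tauAux_key {R : Type*} [Ring R] {n : ℕ} {τ : ℕ → R}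
    (hsq : ∀ k, 1 ≤ k → k ≤ n - 1 → τ k ^ 2 = 1)
    (hbraid : ∀ k, 1 ≤ k → k + 1 ≤ n - 1 →
      τ k * τ (k + 1) * τ k = τ (k + 1) * τ k * τ (k + 1))
    (hanti : ∀ k l, 1 ≤ k → k ≤ n - 1 → 1 ≤ l → l ≤ n - 1 →
      (k + 1 < l ∨ l + 1 < k) → τ k * τ l = -(τ l * τ k)) :
    ∀ j i, 1 ≤ j → j < i → i ≤ n - 1 →
      tauAux τ j (i + 1 - j) = -(τ i * tauAux τ j (i - j) * τ i) := by
  intro j i hj hji hin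
  obtain ⟨d, rfl⟩ : ∃ d, i = j + d + 1 := ⟨i - j - 1, by omega⟩
  have h1 : j + d + 1 + 1 - j = d + 2 := by omega
  have h2 : j + d + 1 - j = d + 1 := by omega
  rw [h1, h2]
  show -(tauAux τ j (d + 1) * τ (j + d + 1) * tauAux τ j (d + 1)) =
    -(τ (j + d + 1) * tauAux τ j (d + 1) * τ (j + d + 1))
  rw [neg_inj]
  rcases d with _ | e
  · show τ j * τ (j + 0 + 1) * τ j = τ (j + 0 + 1) * τ j * τ (j + 0 + 1)
    simpa using hbraid j hj (by omega)
  · -- i = j + e + 2, A = tauAux τ j (e+2) = -(B * τ (j+e+1) * B)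
    set i := j + (e + 1) + 1 with hidef
    set B := tauAux τ j (e + 1) with hBdef
    have hA : tauAux τ j (e + 2) = -(B * τ (j + e + 1) * B) := rfl
    have hB2 : B * B = 1 := tauAux_sq_s17 hsq (e + 1) j hj (by omega) (by omega)
    have hBa : B * τ i = -(τ i * B) := tauAux_anti hanti (e + 1) j i hj (by omega) (by omega) hin
    have hbr : τ (j + e + 1) * τ i * τ (j + e + 1) = τ i * τ (j + e + 1) * τ i := by
      have := hbraid (j + e + 1) (by omega) (by omega)
      simpa [hidef, show j + e + 1 + 1 = j + (e + 1) + 1 from by omega] using this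
    rw [hA]
    set m := τ (j + e + 1) with hmdef
    -- goal: -(B*m*B) * τ i * -(B*m*B) = τ i * -(B*m*B) * τ i
    simp only [neg_mul, mul_neg, neg_neg, mul_assoc]
    -- LHS: B * (m * (B * (τ i * (B * (m * B)))))
    -- RHS: -(τ i * (B * (m * (B * τ i))))
    have hq : B * (τ i * B) = -τ i := by
      rw [← mul_assoc, hBa, neg_mul, mul_assoc, hB2, mul_one]
    rw [show B * (τ i * (B * (m * B))) = (B * (τ i * B)) * (m * B) from by
      simp only [mul_assoc], hq]
    -- LHS now: B * (m * (-τ i * (m * B)))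
    rw [show B * τ i = -(τ i * B) from hBa]
    -- RHS: -(τ i * (B * (m * -(τ i * B))))
    simp only [neg_mul, mul_neg, neg_neg]
    -- LHS: -(B * (m * (τ i * (m * B)))) ; RHS: τ i * (B * (m * (τ i * B)))
    have hBa' : τ i * B = -(B * τ i) := by rw [hBa, neg_neg]
    rw [show τ i * (B * (m * (τ i * B))) = (τ i * B) * (m * (τ i * B)) from by
      simp only [mul_assoc], hBa']
    simp only [neg_mul, neg_inj, mul_assoc]
    congr 1
    rw [show m * (τ i * (m * B)) = (m * τ i * m) * B from by simp only [mul_assoc], hbr]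
    simp only [mul_assoc]
    rw [← hBa']

/-- In the algebra `𝔄ₙ` (equivalently, in any ring with elements
`τ₁, …, τ_{n-1}` satisfying its defining relations), the odd Young–Jucys–Murphy
elements `πₖ = τ_{1k} + ⋯ + τ_{k-1,k}` satisfy `τᵢπᵢ + π_{i+1}τᵢ = 1` and
`(πᵢ - π_{i+1})τᵢ = τᵢ(πᵢ - π_{i+1})` for all `i = 1, …, n-1`. -/
theorem stmt17 {R : Type*} [Ring R] (n : ℕ) (τ : ℕ → R)
    (hsq : ∀ k, 1 ≤ k → k ≤ n - 1 → τ k ^ 2 = 1)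
    (hbraid : ∀ k, 1 ≤ k → k + 1 ≤ n - 1 →
      τ k * τ (k + 1) * τ k = τ (k + 1) * τ k * τ (k + 1))
    (hanti : ∀ k l, 1 ≤ k → k ≤ n - 1 → 1 ≤ l → l ≤ n - 1 →
      (k + 1 < l ∨ l + 1 < k) → τ k * τ l = -(τ l * τ k)) :
    ∀ i, 1 ≤ i → i ≤ n - 1 →
      τ i * piYJM τ i + piYJM τ (i + 1) * τ i = 1 ∧
      (piYJM τ i - piYJM τ (i + 1)) * τ i = τ i * (piYJM τ i - piYJM τ (i + 1)) := by
  intro i hi1 hin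
  have hti : τ i * τ i = 1 := by have := hsq i hi1 hin; rwa [pow_two] at this
  have hkey : ∀ j ∈ Finset.Ico 1 i, tau2 τ j (i + 1) = -(τ i * tau2 τ j i * τ i) := by
    intro j hj
    rw [Finset.mem_Ico] at hj
    rw [tau2, if_pos (by omega : j ≤ i + 1), tau2, if_pos (by omega : j ≤ i)]
    exact tauAux_key hsq hbraid hanti j i hj.1 hj.2 hin
  have hpi : piYJM τ i = ∑ j ∈ Finset.Ico 1 i, tau2 τ j i := rfl
  have hpis : piYJM τ (i + 1) = (∑ j ∈ Finset.Ico 1 i, tau2 τ j (i + 1)) + τ i := by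
    rw [piYJM, Finset.sum_Ico_succ_top hi1]
    congr 1
    rw [tau2, if_pos (by omega : i ≤ i + 1)]
    have h1 : i + 1 - i = 1 := by omega
    rw [h1]
    rfl
  constructor
  · rw [hpi, hpis, Finset.mul_sum, add_mul, Finset.sum_mul]
    have hz : ∀ j ∈ Finset.Ico 1 i, tau2 τ j (i + 1) * τ i = -(τ i * tau2 τ j i) := by
      intro j hj
      rw [hkey j hj]
      simp only [neg_mul, mul_assoc, hti, mul_one]
    rw [Finset.sum_congr rfl hz, Finset.sum_neg_distrib, hti]
    abel
  · rw [hpi, hpis]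
    have hsplit : (∑ j ∈ Finset.Ico 1 i, tau2 τ j i) -
        ((∑ j ∈ Finset.Ico 1 i, tau2 τ j (i + 1)) + τ i)
        = (∑ j ∈ Finset.Ico 1 i, (tau2 τ j i - tau2 τ j (i + 1))) - τ i := by
      rw [Finset.sum_sub_distrib]; abel
    rw [hsplit, sub_mul, mul_sub, Finset.sum_mul, Finset.mul_sum]
    congr 1
    apply Finset.sum_congr rfl
    intro j hj
    rw [hkey j hj, sub_neg_eq_add, add_mul, mul_add]
    simp only [mul_assoc, hti, mul_one]
    rw [← mul_assoc (τ i) (τ i), hti, one_mul]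
    abel
end

section
/- In the algebra 𝔄ₙ, setting Fᵢ = τᵢ(πᵢ² − π_{i+1}²) + (π_{i+1} − πᵢ), the relations Fᵢπᵢ + π_{i+1}Fᵢ = 0, Fᵢπ_{i+1} + πᵢFᵢ = 0, and Fᵢ² = πᵢ² + π_{i+1}² − (πᵢ² − π_{i+1}²)² hold, as does (πᵢ² − π_{i+1}²)τᵢ + τᵢ(πᵢ² − π_{i+1}²) = 2(πᵢ − π_{i+1}). -/
def tp (a b x : ℕ) : ℕ := if x = a then b else if x = b then a else x

section
variable {R : Type*} [Ring R] (τ : ℕ → R)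

lemma tau2_same (c : ℕ) : tau2 τ c c = 0 := by simp [tau2, tauAux]

lemma tau2_adj (c : ℕ) : tau2 τ c (c+1) = τ c := by simp [tau2, tauAux]

lemma tau2_succ {c d : ℕ} (h : c < d) :
    tau2 τ c (d+1) = -(tau2 τ c d * τ d * tau2 τ c d) := by
  obtain ⟨k, rfl⟩ : ∃ k, d = c + k + 1 := ⟨d - c - 1, by omega⟩
  simp only [tau2, if_pos (by omega : c ≤ c+k+1+1), if_pos (by omega : c ≤ c+k+1)]
  have e1 : c + k + 1 + 1 - c = k + 2 := by omega
  have e2 : c + k + 1 - c = k + 1 := by omega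
  rw [e1, e2]
  rfl

lemma tau2_antisymm_s18 (c d : ℕ) : tau2 τ d c = -(tau2 τ c d) := by
  rcases lt_trichotomy c d with h | rfl | h
  · simp only [tau2, if_neg (by omega : ¬ d ≤ c), if_pos (le_of_lt h)]
  · simp [tau2, tauAux]
  · simp only [tau2, if_pos (le_of_lt h), if_neg (by omega : ¬ c ≤ d), neg_neg]

lemma conj3 {t a b c a' b' c' : R} (h1 : t*a = -(a'*t)) (h2 : t*b = -(b'*t))
    (h3 : t*c = -(c'*t)) : t * (-(a*b*c)) = -(-(a'*b'*c') * t) := by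
  calc t * -(a*b*c) = -((t*a)*(b*c)) := by noncomm_ring
    _ = -((-(a'*t))*(b*c)) := by rw [h1]
    _ = a' * ((t*b)*c) := by noncomm_ring
    _ = a' * ((-(b'*t))*c) := by rw [h2]
    _ = -((a'*b')*(t*c)) := by noncomm_ring
    _ = -((a'*b')*(-(c'*t))) := by rw [h3]
    _ = -(-(a'*b'*c')*t) := by noncomm_ring

variable (n : ℕ)

lemma tau2_sq_s18 (hsq : ∀ k, 1 ≤ k → k ≤ n - 1 → τ k ^ 2 = 1)
    {c d : ℕ} (hc : 1 ≤ c) (hcd : c < d) (hdn : d ≤ n) :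
    tau2 τ c d * tau2 τ c d = 1 := by
  induction d, hcd using Nat.le_induction with
  | base =>
    rw [tau2_adj, ← pow_two]
    exact hsq c hc (by omega)
  | succ d hd ih =>
    have hA : tau2 τ c d * tau2 τ c d = 1 := ih (by omega)
    have hτ : τ d * τ d = 1 := by
      rw [← pow_two]; exact hsq d (by omega) (by omega)
    rw [tau2_succ τ (by omega : c < d)]
    set A := tau2 τ c d
    calc -(A * τ d * A) * -(A * τ d * A)
        = A * τ d * (A * A) * τ d * A := by noncomm_ring
      _ = A * (τ d * τ d) * A := by rw [hA]; noncomm_ring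
      _ = 1 := by rw [hτ, mul_one, hA]

lemma conj_high (hanti : ∀ k l, 1 ≤ k → k ≤ n - 1 → 1 ≤ l → l ≤ n - 1 →
      (k + 1 < l ∨ l + 1 < k) → τ k * τ l = -(τ l * τ k))
    {m c d : ℕ} (hc : 1 ≤ c) (hcd : c < d) (hdm : d < m) (hm : m + 1 ≤ n) :
    τ m * tau2 τ c d = -(tau2 τ c d * τ m) := by
  induction d, hcd using Nat.le_induction with
  | base =>
    rw [tau2_adj]
    exact hanti m c (by omega) (by omega) (by omega) (by omega) (by omega)
  | succ d hd ih =>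
    have h1 : τ m * tau2 τ c d = -(tau2 τ c d * τ m) := ih (by omega)
    have h2 : τ m * τ d = -(τ d * τ m) :=
      hanti m d (by omega) (by omega) (by omega) (by omega) (by omega)
    rw [tau2_succ τ (by omega : c < d)]
    exact conj3 h1 h2 h1

lemma tau2_triple (hsq : ∀ k, 1 ≤ k → k ≤ n - 1 → τ k ^ 2 = 1)
    (hanti : ∀ k l, 1 ≤ k → k ≤ n - 1 → 1 ≤ l → l ≤ n - 1 →
      (k + 1 < l ∨ l + 1 < k) → τ k * τ l = -(τ l * τ k))
    {x y z : ℕ} (hx : 1 ≤ x) (hxy : x < y) (hyz : y < z) (hz : z ≤ n) :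
    tau2 τ x z = -(tau2 τ x y * tau2 τ y z * tau2 τ x y) := by
  induction z, hyz using Nat.le_induction with
  | base => rw [tau2_adj]; exact tau2_succ τ hxy
  | succ z hz' ih =>
    have hPz : tau2 τ x z = -(tau2 τ x y * tau2 τ y z * tau2 τ x y) := ih (by omega)
    have hP2 : tau2 τ x y * tau2 τ x y = 1 := tau2_sq_s18 τ n hsq hx hxy (by omega)
    have hcomm : τ z * tau2 τ x y = -(tau2 τ x y * τ z) :=
      conj_high τ n hanti hx hxy (by omega) (by omega)
    rw [tau2_succ τ (by omega : x < z), hPz, tau2_succ τ (by omega : y < z)]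
    set P := tau2 τ x y
    set Q := tau2 τ y z
    calc -(-(P*Q*P) * τ z * -(P*Q*P))
        = -(P*Q*(P*(τ z*P))*Q*P) := by noncomm_ring
      _ = -(P*Q*(P*(-(P*τ z)))*Q*P) := by rw [hcomm]
      _ = (P*Q)*((P*P)*τ z)*(Q*P) := by noncomm_ring
      _ = -(P * -(Q * τ z * Q) * P) := by rw [hP2]; noncomm_ring


lemma conj_base (hsq : ∀ k, 1 ≤ k → k ≤ n - 1 → τ k ^ 2 = 1)
    (hbraid : ∀ k, 1 ≤ k → k + 1 ≤ n - 1 →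
      τ k * τ (k + 1) * τ k = τ (k + 1) * τ k * τ (k + 1))
    (hanti : ∀ k l, 1 ≤ k → k ≤ n - 1 → 1 ≤ l → l ≤ n - 1 →
      (k + 1 < l ∨ l + 1 < k) → τ k * τ l = -(τ l * τ k))
    {m c : ℕ} (hm : 1 ≤ m) (hmn : m + 1 ≤ n) (hc : 1 ≤ c) (hcn : c + 1 ≤ n) :
    τ m * τ c = -(tau2 τ (tp m (m+1) c) (tp m (m+1) (c+1)) * τ m) := by
  by_cases h1 : m = c
  · subst h1
    have e1 : tp m (m+1) m = m+1 := by simp only [tp]; split_ifs <;> omega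
    have e2 : tp m (m+1) (m+1) = m := by simp only [tp]; split_ifs <;> omega
    rw [e1, e2, tau2_antisymm_s18, tau2_adj]
    noncomm_ring
  · by_cases h2 : m = c + 1
    · subst h2
      have e1 : tp (c+1) (c+2) c = c := by simp only [tp]; split_ifs <;> omega
      have e2 : tp (c+1) (c+2) (c+1) = c+2 := by simp only [tp]; split_ifs <;> omega
      rw [e1, e2, tau2_succ τ (by omega : c < c+1), tau2_adj]
      have hb : τ c * τ (c+1) * τ c = τ (c+1) * τ c * τ (c+1) :=
        hbraid c hc (by omega)
      have hs : τ (c+1) * τ (c+1) = 1 := by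
        rw [← pow_two]; exact hsq (c+1) (by omega) (by omega)
      calc τ (c+1) * τ c = (τ (c+1) * τ c) * (τ (c+1) * τ (c+1)) := by
            rw [hs, mul_one]
        _ = (τ (c+1) * τ c * τ (c+1)) * τ (c+1) := by noncomm_ring
        _ = (τ c * τ (c+1) * τ c) * τ (c+1) := by rw [hb]
        _ = -(-(τ c * τ (c+1) * τ c) * τ (c+1)) := by noncomm_ring
    · by_cases h3 : c = m + 1
      · subst h3
        have e1 : tp m (m+1) (m+1) = m := by simp only [tp]; split_ifs <;> omega
        have e2 : tp m (m+1) (m+2) = m+2 := by simp only [tp]; split_ifs <;> omega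
        rw [e1, e2, tau2_succ τ (by omega : m < m+1), tau2_adj]
        have hs : τ m * τ m = 1 := by
          rw [← pow_two]; exact hsq m (by omega) (by omega)
        calc τ m * τ (m+1) = ((τ m * τ (m+1)) * (τ m * τ m)) := by rw [hs, mul_one]
          _ = -(-(τ m * τ (m+1) * τ m) * τ m) := by noncomm_ring
      · have e1 : tp m (m+1) c = c := by simp only [tp]; split_ifs <;> omega
        have e2 : tp m (m+1) (c+1) = c+1 := by simp only [tp]; split_ifs <;> omega
        rw [e1, e2, tau2_adj]
        exact hanti m c (by omega) (by omega) (by omega) (by omega) (by omega)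

lemma conj_gen_s18 (hsq : ∀ k, 1 ≤ k → k ≤ n - 1 → τ k ^ 2 = 1)
    (hbraid : ∀ k, 1 ≤ k → k + 1 ≤ n - 1 →
      τ k * τ (k + 1) * τ k = τ (k + 1) * τ k * τ (k + 1))
    (hanti : ∀ k l, 1 ≤ k → k ≤ n - 1 → 1 ≤ l → l ≤ n - 1 →
      (k + 1 < l ∨ l + 1 < k) → τ k * τ l = -(τ l * τ k))
    {c d : ℕ} (hc : 1 ≤ c) (hcd : c < d) :
    d ≤ n → ∀ m, 1 ≤ m → m + 1 ≤ n →
      τ m * tau2 τ c d = -(tau2 τ (tp m (m+1) c) (tp m (m+1) d) * τ m) := by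
  induction d, hcd using Nat.le_induction with
  | base =>
    intro hdn m hm hmn
    rw [tau2_adj]
    exact conj_base τ n hsq hbraid hanti hm hmn hc hdn
  | succ d hd ih =>
    intro hdn m hm hmn
    by_cases h1 : m = d
    · -- m = d
      subst h1
      have e1 : tp m (m+1) c = c := by simp only [tp]; split_ifs <;> omega
      have e2 : tp m (m+1) (m+1) = m := by simp only [tp]; split_ifs <;> omega
      have e3 : tp m (m+1) m = m+1 := by simp only [tp]; split_ifs <;> omega
      rw [e1, e2]
      have hA1 : τ m * tau2 τ c m = -(tau2 τ c (m+1) * τ m) := by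
        have h := ih (by omega) m hm hmn
        rwa [e1, e3] at h
      have hsm : τ m * τ m = 1 := by
        rw [← pow_two]; exact hsq m (by omega) (by omega)
      have hAA : tau2 τ c m * tau2 τ c m = 1 := tau2_sq_s18 τ n hsq hc (by omega) (by omega)
      rw [tau2_succ τ (by omega : c < m)]
      set A := tau2 τ c m
      calc τ m * -(A * τ m * A) = -((τ m * A)*(τ m * A)) := by noncomm_ring
        _ = -((-(tau2 τ c (m+1) * τ m))*(τ m * A)) := by nth_rewrite 1 [hA1]; rfl
        _ = tau2 τ c (m+1) * ((τ m * τ m) * A) := by noncomm_ring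
        _ = -(A * τ m * (A * A)) := by
              rw [hsm, one_mul, tau2_succ τ (by omega : c < m)]; noncomm_ring
        _ = -(A * τ m) := by rw [hAA, mul_one]
    · by_cases h2 : m = d + 1
      · -- m = d+1
        subst h2
        have e1 : tp (d+1) (d+2) c = c := by simp only [tp]; split_ifs <;> omega
        have e2 : tp (d+1) (d+2) (d+1) = d+2 := by simp only [tp]; split_ifs <;> omega
        have e3 : tp (d+1) (d+2) d = d := by simp only [tp]; split_ifs <;> omega
        rw [e1, e2]
        have ha : τ (d+1) * tau2 τ c d = -(tau2 τ c d * τ (d+1)) := by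
          have h := ih (by omega) (d+1) (by omega) hmn
          rwa [e1, e3] at h
        have hb : τ (d+1) * τ d = -(tau2 τ d (d+2) * τ (d+1)) := by
          have h := conj_base τ n hsq hbraid hanti (m := d+1) (c := d)
            (by omega) hmn (by omega) (by omega)
          rwa [e3, e2] at h
        have hT : tau2 τ c (d+2) = -(tau2 τ c d * tau2 τ d (d+2) * tau2 τ c d) :=
          tau2_triple τ n hsq hanti hc (by omega) (by omega) (by omega)
        rw [tau2_succ τ (by omega : c < d), hT]
        exact conj3 ha hb ha
      · by_cases h4 : m = c
        · subst h4
          have e1 : tp m (m+1) m = m+1 := by simp only [tp]; split_ifs <;> omega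
          have e2 : tp m (m+1) (d+1) = d+1 := by simp only [tp]; split_ifs <;> omega
          rw [e1, e2]
          by_cases h5 : d = m + 1
          · subst h5
            rw [tau2_succ τ (by omega : m < m+1), tau2_adj, tau2_adj]
            have hs : τ m * τ m = 1 := by
              rw [← pow_two]; exact hsq m (by omega) (by omega)
            calc τ m * -(τ m * τ (m+1) * τ m)
                = -((τ m * τ m) * (τ (m+1) * τ m)) := by noncomm_ring
              _ = -(τ (m+1) * τ m) := by rw [hs, one_mul]
          · -- d ≥ m+2
            have e3 : tp m (m+1) d = d := by simp only [tp]; split_ifs <;> omega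
            have ha : τ m * tau2 τ m d = -(tau2 τ (m+1) d * τ m) := by
              have h := ih (by omega) m hm hmn
              rwa [e1, e3] at h
            have hb : τ m * τ d = -(τ d * τ m) :=
              hanti m d (by omega) (by omega) (by omega) (by omega) (by omega)
            rw [tau2_succ τ (by omega : m < d), tau2_succ τ (by omega : m+1 < d)]
            exact conj3 ha hb ha
        · by_cases h5 : c = m + 1
          · subst h5
            have e1 : tp m (m+1) (m+1) = m := by simp only [tp]; split_ifs <;> omega
            have e2 : tp m (m+1) (d+1) = d+1 := by simp only [tp]; split_ifs <;> omega
            have e3 : tp m (m+1) d = d := by simp only [tp]; split_ifs <;> omega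
            rw [e1, e2]
            have ha : τ m * tau2 τ (m+1) d = -(tau2 τ m d * τ m) := by
              have h := ih (by omega) m hm hmn
              rwa [e1, e3] at h
            have hb : τ m * τ d = -(τ d * τ m) :=
              hanti m d (by omega) (by omega) (by omega) (by omega) (by omega)
            rw [tau2_succ τ (by omega : m + 1 < d), tau2_succ τ (by omega : m < d)]
            exact conj3 ha hb ha
          · by_cases h6 : m + 1 = d
            · -- m = d - 1
              subst h6
              have e1 : tp m (m+1) c = c := by simp only [tp]; split_ifs <;> omega
              have e2 : tp m (m+1) (m+1+1) = m+1+1 := by simp only [tp]; split_ifs <;> omega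
              have e3 : tp m (m+1) (m+1) = m := by simp only [tp]; split_ifs <;> omega
              have e4 : tp m (m+1) m = m+1 := by simp only [tp]; split_ifs <;> omega
              rw [e1, e2]
              have ha : τ m * tau2 τ c (m+1) = -(tau2 τ c m * τ m) := by
                have h := ih (by omega) m hm hmn
                rwa [e1, e3] at h
              have hb : τ m * τ (m+1) = -(tau2 τ m (m+2) * τ m) := by
                have h := conj_base τ n hsq hbraid hanti (m := m) (c := m+1)
                  (by omega) hmn (by omega) (by omega)
                rwa [e3, show tp m (m+1) (m+1+1) = m+2 from e2] at h
              have hT : tau2 τ c (m+2) = -(tau2 τ c m * tau2 τ m (m+2) * tau2 τ c m) :=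
                tau2_triple τ n hsq hanti hc (by omega) (by omega) (by omega)
              have step : τ m * tau2 τ c (m+1+1) =
                  -(-(tau2 τ c m * tau2 τ m (m+2) * tau2 τ c m) * τ m) := by
                rw [tau2_succ τ (by omega : c < m+1)]
                exact conj3 ha hb ha
              rw [← hT] at step
              exact step
            · -- generic far case
              have e1 : tp m (m+1) c = c := by simp only [tp]; split_ifs <;> omega
              have e2 : tp m (m+1) (d+1) = d+1 := by simp only [tp]; split_ifs <;> omega
              have e3 : tp m (m+1) d = d := by simp only [tp]; split_ifs <;> omega
              rw [e1, e2]
              have ha : τ m * tau2 τ c d = -(tau2 τ c d * τ m) := by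
                have h := ih (by omega) m hm hmn
                rwa [e1, e3] at h
              have hb : τ m * τ d = -(τ d * τ m) :=
                hanti m d (by omega) (by omega) (by omega) (by omega) (by omega)
              rw [tau2_succ τ (by omega : c < d)]
              exact conj3 ha hb ha


lemma conj_all (hsq : ∀ k, 1 ≤ k → k ≤ n - 1 → τ k ^ 2 = 1)
    (hbraid : ∀ k, 1 ≤ k → k + 1 ≤ n - 1 →
      τ k * τ (k + 1) * τ k = τ (k + 1) * τ k * τ (k + 1))
    (hanti : ∀ k l, 1 ≤ k → k ≤ n - 1 → 1 ≤ l → l ≤ n - 1 →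
      (k + 1 < l ∨ l + 1 < k) → τ k * τ l = -(τ l * τ k))
    {m c d : ℕ} (hm : 1 ≤ m) (hmn : m + 1 ≤ n) (hc : 1 ≤ c) (hcn : c ≤ n)
    (hd : 1 ≤ d) (hdn : d ≤ n) :
    τ m * tau2 τ c d = -(tau2 τ (tp m (m+1) c) (tp m (m+1) d) * τ m) := by
  rcases lt_trichotomy c d with h | rfl | h
  · exact conj_gen_s18 τ n hsq hbraid hanti hc h hdn m hm hmn
  · rw [tau2_same, tau2_same]
    simp
  · have hcg := conj_gen_s18 τ n hsq hbraid hanti hd h hcn m hm hmn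
    rw [tau2_antisymm_s18 τ d c, tau2_antisymm_s18 τ (tp m (m+1) d) (tp m (m+1) c)]
    calc τ m * -(tau2 τ d c) = -(τ m * tau2 τ d c) := by noncomm_ring
      _ = -(-(tau2 τ (tp m (m+1) d) (tp m (m+1) c) * τ m)) := by rw [hcg]
      _ = -(-(tau2 τ (tp m (m+1) d) (tp m (m+1) c)) * τ m) := by noncomm_ring

lemma conj_word (hsq : ∀ k, 1 ≤ k → k ≤ n - 1 → τ k ^ 2 = 1)
    (hbraid : ∀ k, 1 ≤ k → k + 1 ≤ n - 1 →
      τ k * τ (k + 1) * τ k = τ (k + 1) * τ k * τ (k + 1))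
    (hanti : ∀ k l, 1 ≤ k → k ≤ n - 1 → 1 ≤ l → l ≤ n - 1 →
      (k + 1 < l ∨ l + 1 < k) → τ k * τ l = -(τ l * τ k))
    {j k : ℕ} (hj : 1 ≤ j) (hjk : j < k) :
    k ≤ n → ∀ c d, 1 ≤ c → c ≤ n → 1 ≤ d → d ≤ n →
      tau2 τ j k * tau2 τ c d = -(tau2 τ (tp j k c) (tp j k d) * tau2 τ j k) := by
  induction k, hjk using Nat.le_induction with
  | base =>
    intro hkn c d hc hcn hd hdn
    rw [tau2_adj]
    exact conj_all τ n hsq hbraid hanti hj hkn hc hcn hd hdn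
  | succ k hk ih =>
    intro hkn c d hc hcn hd hdn
    have hfc : 1 ≤ tp j k c ∧ tp j k c ≤ n := by
      constructor <;> (simp only [tp]; split_ifs <;> omega)
    have hfd : 1 ≤ tp j k d ∧ tp j k d ≤ n := by
      constructor <;> (simp only [tp]; split_ifs <;> omega)
    have hgfc : 1 ≤ tp k (k+1) (tp j k c) ∧ tp k (k+1) (tp j k c) ≤ n := by
      constructor <;> (simp only [tp]; split_ifs <;> omega)
    have hgfd : 1 ≤ tp k (k+1) (tp j k d) ∧ tp k (k+1) (tp j k d) ≤ n := by
      constructor <;> (simp only [tp]; split_ifs <;> omega)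
    have s1 : tau2 τ j k * tau2 τ c d =
        -(tau2 τ (tp j k c) (tp j k d) * tau2 τ j k) :=
      ih (by omega) c d hc hcn hd hdn
    have s2 : τ k * tau2 τ (tp j k c) (tp j k d) =
        -(tau2 τ (tp k (k+1) (tp j k c)) (tp k (k+1) (tp j k d)) * τ k) :=
      conj_all τ n hsq hbraid hanti (by omega) (by omega) hfc.1 hfc.2 hfd.1 hfd.2
    have s3 : tau2 τ j k * tau2 τ (tp k (k+1) (tp j k c)) (tp k (k+1) (tp j k d)) =
        -(tau2 τ (tp j k (tp k (k+1) (tp j k c))) (tp j k (tp k (k+1) (tp j k d))) *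
          tau2 τ j k) :=
      ih (by omega) _ _ hgfc.1 hgfc.2 hgfd.1 hgfd.2
    have ec : tp j k (tp k (k+1) (tp j k c)) = tp j (k+1) c := by
      simp only [tp]; split_ifs <;> omega
    have ed : tp j k (tp k (k+1) (tp j k d)) = tp j (k+1) d := by
      simp only [tp]; split_ifs <;> omega
    rw [ec, ed] at s3
    set K := tau2 τ j k
    set Y1 := tau2 τ (tp j k c) (tp j k d)
    set Y2 := tau2 τ (tp k (k+1) (tp j k c)) (tp k (k+1) (tp j k d))
    set Y3 := tau2 τ (tp j (k+1) c) (tp j (k+1) d)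
    rw [tau2_succ τ (by omega : j < k)]
    calc -(K * τ k * K) * tau2 τ c d
        = -((K * τ k) * (K * tau2 τ c d)) := by noncomm_ring
      _ = -((K * τ k) * (-(Y1 * K))) := by rw [s1]
      _ = (K * (τ k * Y1)) * K := by noncomm_ring
      _ = (K * (-(Y2 * τ k))) * K := by rw [s2]
      _ = -((K * Y2) * (τ k * K)) := by noncomm_ring
      _ = -((-(Y3 * K)) * (τ k * K)) := by rw [s3]
      _ = -(Y3 * -(K * τ k * K)) := by noncomm_ring


end

lemma finale {R : Type*} [Ring R] (t p q : R) (h0 : t*t = 1) (h1 : t*p + q*t = 1)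
    (h3 : p*q + q*p = 0) :
    ((p^2 - q^2)*t + t*(p^2 - q^2) = 2*(p - q)) ∧
    ((t*(p^2 - q^2) + (q - p))*p + q*(t*(p^2 - q^2) + (q - p)) = 0) ∧
    ((t*(p^2 - q^2) + (q - p))*q + p*(t*(p^2 - q^2) + (q - p)) = 0) ∧
    ((t*(p^2 - q^2) + (q - p))^2 = p^2 + q^2 - (p^2 - q^2)^2) := by
  have h2 : p*t + t*q = 1 := by
    have e : p*t + t*q = 1 + (t*(t*p + q*t - 1)*t - (t*t - 1)*(p*t) - (t*q)*(t*t - 1)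
        + (t*t - 1)) := by noncomm_ring
    rw [e, h1, h0]
    noncomm_ring
  have z0 : t*t - 1 = 0 := by rw [h0, sub_self]
  have z1 : t*p + q*t - 1 = 0 := by rw [h1, sub_self]
  have z2 : p*t + t*q - 1 = 0 := by rw [h2, sub_self]
  refine ⟨?_, ?_, ?_, ?_⟩
  · have g : (p^2 - q^2)*t + t*(p^2 - q^2) =
        2*(p - q) + p*(p*t + t*q - 1) - (p*t + t*q - 1)*q - q*(t*p + q*t - 1)
          + (t*p + q*t - 1)*p := by noncomm_ring
    rw [g, z1, z2]
    noncomm_ring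
  · have g : (t*(p^2 - q^2) + (q - p))*p + q*(t*(p^2 - q^2) + (q - p)) =
        (t*p + q*t - 1)*(p^2 - q^2) + t*((p*q + q*p)*q - q*(p*q + q*p)) := by
      noncomm_ring
    rw [g, z1, h3]
    noncomm_ring
  · have g : (t*(p^2 - q^2) + (q - p))*q + p*(t*(p^2 - q^2) + (q - p)) =
        (p*t + t*q - 1)*(p^2 - q^2) + t*(p*(p*q + q*p) - (p*q + q*p)*p) := by
      noncomm_ring
    rw [g, z2, h3]
    noncomm_ring
  · have g : (t*(p^2 - q^2) + (q - p))^2 =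
        p^2 + q^2 - (p^2 - q^2)^2 - (t*t - 1)*(p^2 - q^2)^2
          + t*(p*(p*t + t*q - 1) - (p*t + t*q - 1)*q - q*(t*p + q*t - 1)
              + (t*p + q*t - 1)*p)*(p^2 - q^2)
          + t*((p*(p*q + q*p) - (p*q + q*p)*p) - ((p*q + q*p)*q - q*(p*q + q*p)))
          + ((t*p + q*t - 1) - (p*t + t*q - 1))*(p^2 - q^2)
          - (p*q + q*p) := by noncomm_ring
    rw [g, z0, z1, z2, h3]
    noncomm_ring

/-- In the algebra `𝔄ₙ`, setting
`Fᵢ = τᵢ(πᵢ² - π_{i+1}²) + (π_{i+1} - πᵢ)`, the relations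
`(πᵢ² - π_{i+1}²)τᵢ + τᵢ(πᵢ² - π_{i+1}²) = 2(πᵢ - π_{i+1})`,
`Fᵢπᵢ + π_{i+1}Fᵢ = 0`, `Fᵢπ_{i+1} + πᵢFᵢ = 0` and
`Fᵢ² = πᵢ² + π_{i+1}² - (πᵢ² - π_{i+1}²)²` hold for `i = 1, …, n-1`. -/
theorem stmt18 {R : Type*} [Ring R] (n : ℕ) (τ : ℕ → R)
    (hsq : ∀ k, 1 ≤ k → k ≤ n - 1 → τ k ^ 2 = 1)
    (hbraid : ∀ k, 1 ≤ k → k + 1 ≤ n - 1 →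
      τ k * τ (k + 1) * τ k = τ (k + 1) * τ k * τ (k + 1))
    (hanti : ∀ k l, 1 ≤ k → k ≤ n - 1 → 1 ≤ l → l ≤ n - 1 →
      (k + 1 < l ∨ l + 1 < k) → τ k * τ l = -(τ l * τ k)) :
    ∀ i, 1 ≤ i → i ≤ n - 1 →
      (piYJM τ i ^ 2 - piYJM τ (i + 1) ^ 2) * τ i +
          τ i * (piYJM τ i ^ 2 - piYJM τ (i + 1) ^ 2) =
        2 * (piYJM τ i - piYJM τ (i + 1)) ∧
      (τ i * (piYJM τ i ^ 2 - piYJM τ (i + 1) ^ 2) + (piYJM τ (i + 1) - piYJM τ i)) *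
          piYJM τ i +
        piYJM τ (i + 1) *
          (τ i * (piYJM τ i ^ 2 - piYJM τ (i + 1) ^ 2) + (piYJM τ (i + 1) - piYJM τ i)) = 0 ∧
      (τ i * (piYJM τ i ^ 2 - piYJM τ (i + 1) ^ 2) + (piYJM τ (i + 1) - piYJM τ i)) *
          piYJM τ (i + 1) +
        piYJM τ i *
          (τ i * (piYJM τ i ^ 2 - piYJM τ (i + 1) ^ 2) + (piYJM τ (i + 1) - piYJM τ i)) = 0 ∧
      (τ i * (piYJM τ i ^ 2 - piYJM τ (i + 1) ^ 2) + (piYJM τ (i + 1) - piYJM τ i)) ^ 2 =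
        piYJM τ i ^ 2 + piYJM τ (i + 1) ^ 2 -
          (piYJM τ i ^ 2 - piYJM τ (i + 1) ^ 2) ^ 2 := by

  intro i hi1 hi2
  have hin : i + 1 ≤ n := by omega
  have h0 : τ i * τ i = 1 := by rw [← pow_two]; exact hsq i hi1 hi2
  -- the key exchange relation
  have key : ∀ j ∈ Finset.Ico 1 i, τ i * tau2 τ j i = -(tau2 τ j (i+1) * τ i) := by
    intro j hj
    rw [Finset.mem_Ico] at hj
    have h := conj_gen_s18 τ n hsq hbraid hanti hj.1 hj.2 (by omega) i hi1 hin
    have e1 : tp i (i+1) j = j := by simp only [tp]; split_ifs <;> omega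
    have e2 : tp i (i+1) i = i+1 := by simp only [tp]; split_ifs <;> omega
    rwa [e1, e2] at h
  have h1 : τ i * piYJM τ i + piYJM τ (i+1) * τ i = 1 := by
    have e1 : τ i * piYJM τ i = -((∑ j ∈ Finset.Ico 1 i, tau2 τ j (i+1)) * τ i) := by
      simp only [piYJM]
      rw [Finset.mul_sum, Finset.sum_congr rfl key, Finset.sum_neg_distrib,
        ← Finset.sum_mul]
    have e2 : piYJM τ (i+1) = (∑ j ∈ Finset.Ico 1 i, tau2 τ j (i+1)) + τ i := by
      simp only [piYJM]
      rw [Finset.sum_Ico_succ_top (by omega : 1 ≤ i), tau2_adj]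
    rw [e1, e2, add_mul, h0]
    abel
  have key2 : ∀ j ∈ Finset.Ico 1 i,
      (∑ l ∈ Finset.Ico 1 (i+1),
        (tau2 τ j i * tau2 τ l (i+1) + tau2 τ l (i+1) * tau2 τ j i)) = 0 := by
    intro j hj
    rw [Finset.mem_Ico] at hj
    have hBB : tau2 τ j i * tau2 τ j i = 1 :=
      tau2_sq_s18 τ n hsq hj.1 hj.2 (by omega)
    have hsub : ({j, i} : Finset ℕ) ⊆ Finset.Ico 1 (i+1) := by
      intro x hx
      simp only [Finset.mem_insert, Finset.mem_singleton] at hx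
      rw [Finset.mem_Ico]
      omega
    have hzero : ∀ l ∈ Finset.Ico 1 (i+1), l ∉ ({j, i} : Finset ℕ) →
        tau2 τ j i * tau2 τ l (i+1) + tau2 τ l (i+1) * tau2 τ j i = 0 := by
      intro l hl hln
      rw [Finset.mem_Ico] at hl
      simp only [Finset.mem_insert, Finset.mem_singleton, not_or] at hln
      have hw := conj_word τ n hsq hbraid hanti hj.1 hj.2 (by omega) l (i+1)
        hl.1 (by omega) (by omega) (by omega)
      have e1 : tp j i l = l := by simp only [tp]; split_ifs <;> omega
      have e2 : tp j i (i+1) = i+1 := by simp only [tp]; split_ifs <;> omega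
      rw [e1, e2] at hw
      rw [hw]
      exact neg_add_cancel _
    rw [← Finset.sum_subset hsub hzero, Finset.sum_pair (by omega : j ≠ i)]
    rw [tau2_succ τ hj.2, tau2_adj]
    set B := tau2 τ j i
    have zB : B * B - 1 = 0 := by rw [hBB, sub_self]
    calc B * -(B * τ i * B) + -(B * τ i * B) * B + (B * τ i + τ i * B)
        = -((B*B - 1)*(τ i*B)) - (B*τ i)*(B*B - 1) := by noncomm_ring
      _ = 0 := by rw [zB]; noncomm_ring
  have h3 : piYJM τ i * piYJM τ (i+1) + piYJM τ (i+1) * piYJM τ i = 0 := by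
    simp only [piYJM]
    rw [Finset.sum_mul_sum, Finset.sum_mul_sum,
      Finset.sum_comm (s := Finset.Ico 1 (i+1)) (t := Finset.Ico 1 i), ← Finset.sum_add_distrib]
    refine Finset.sum_eq_zero ?_
    intro j hj
    rw [← Finset.sum_add_distrib]
    exact key2 j hj
  exact finale (τ i) (piYJM τ i) (piYJM τ (i+1)) h0 h1 h3
end
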